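/- arXiv:1807.01564 — 8 statements merged into one kernel-verified Lean document; each statement's English description precedes it below -/
import Mathlib

section
/- For every q ∈ (-1, 0), one has θ(q, 1) > 0, where θ(q,1) = Σ_{j=0}^∞ q^{j(j+1)/2}. -/
set_option linter.unnecessarySeqFocus false

namespace ThetaAux


/-- triangular number exponent, for `n : ℤ`. -/
def T (n : ℤ) : ℕ := (n * (n + 1) / 2).toNat

/-- square exponent -/
def S (n : ℤ) : ℕ := n.natAbs ^ 2

lemma T_cast (n : ℤ) : (T n : ℤ) = n * (n + 1) / 2 := by
  apply Int.toNat_of_nonneg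
  apply Int.ediv_nonneg _ (by norm_num)
  rcases le_or_gt 0 n with h | h
  · exact mul_nonneg h (by omega)
  · nlinarith

lemma two_mul_T (n : ℤ) : 2 * (T n : ℤ) = n * (n + 1) := by
  rw [T_cast]
  obtain ⟨k, hk⟩ := Int.even_mul_succ_self n
  rw [hk]; omega

lemma S_cast (n : ℤ) : (S n : ℤ) = n ^ 2 := by
  unfold S
  push_cast
  rw [sq, sq, abs_mul_abs_self]

lemma T_neg (n : ℤ) : T (-(n + 1)) = T n := by
  have h1 := two_mul_T (-(n+1))
  have h2 := two_mul_T n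
  have : (T (-(n+1)) : ℤ) = (T n : ℤ) := by nlinarith [h1, h2]
  exact_mod_cast this

lemma E1 (j k : ℤ) : T (j + k) + T (j - k) = 2 * T j + S k := by
  have h1 := two_mul_T (j + k)
  have h2 := two_mul_T (j - k)
  have h3 := two_mul_T j
  have hS := S_cast k
  have : ((T (j+k) + T (j-k) : ℕ) : ℤ) = ((2 * T j + S k : ℕ) : ℤ) := by
    push_cast
    nlinarith [h1, h2, h3, hS]
  exact_mod_cast this

lemma E2 (j k : ℤ) : T (j + k) + T (j - k - 1) = S j + 2 * T k := by
  have h1 := two_mul_T (j + k)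
  have h2 := two_mul_T (j - k - 1)
  have h3 := two_mul_T k
  have hS := S_cast j
  have : ((T (j+k) + T (j-k-1) : ℕ) : ℤ) = ((S j + 2 * T k : ℕ) : ℤ) := by
    push_cast
    nlinarith [h1, h2, h3, hS]
  exact_mod_cast this

lemma E3 (r s : ℤ) : S (r + s) + S (r - s) = 2 * S r + 2 * S s := by
  have : ((S (r+s) + S (r-s) : ℕ) : ℤ) = ((2 * S r + 2 * S s : ℕ) : ℤ) := by
    push_cast [S_cast]
    ring
  exact_mod_cast this

lemma T_coe (n : ℕ) : T (n : ℤ) = n * (n + 1) / 2 := by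
  have : ((n * (n + 1) / 2 : ℕ) : ℤ) = (n : ℤ) * ((n : ℤ) + 1) / 2 := by
    rw [Int.natCast_ediv]
    push_cast
    ring_nf
  unfold T
  rw [← this, Int.toNat_natCast]

lemma T_ge (n : ℕ) : n ≤ T (n : ℤ) := by
  rw [T_coe]
  rcases n with _ | m
  · simp
  · rw [Nat.le_div_iff_mul_le (by norm_num)]
    nlinarith

lemma S_ge (n : ℤ) : n.natAbs ≤ S n := by
  unfold S
  nlinarith [n.natAbs]


lemma neg_one_pow_natAbs (m : ℤ) :
    ((-1 : ℝ)) ^ m.natAbs = if Even m then 1 else -1 := by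
  rcases Int.even_or_odd m with h | h
  · rw [if_pos h]
    exact (Int.natAbs_even.mpr h).neg_one_pow
  · rw [if_neg (by simpa [Int.not_even_iff_odd] using h)]
    exact (Int.natAbs_odd.mpr h).neg_one_pow

lemma neg_one_pow_S (m : ℤ) : ((-1 : ℝ)) ^ S m = ((-1 : ℝ)) ^ m.natAbs := by
  unfold S
  rcases Nat.even_or_odd m.natAbs with h | h
  · have h2 : Even (m.natAbs ^ 2) := by rw [sq]; exact h.mul_right _
    rw [h.neg_one_pow, h2.neg_one_pow]
  · rw [h.neg_one_pow, (h.pow).neg_one_pow]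

lemma neg_pow_S (u : ℝ) (m : ℤ) :
    (-u) ^ S m = ((-1 : ℝ)) ^ m.natAbs * u ^ S m := by
  rw [neg_pow, neg_one_pow_S]

-- summability
lemma summable_of_exp_ge {x : ℝ} (hx : |x| < 1) (e : ℕ → ℕ) (he : ∀ n, n ≤ e n) :
    Summable fun n : ℕ => x ^ e n := by
  have hb : ∀ n : ℕ, ‖x ^ e n‖ ≤ |x| ^ n := by
    intro n
    rw [norm_pow, Real.norm_eq_abs]
    exact pow_le_pow_of_le_one (abs_nonneg x) hx.le (he n)
  have hg : Summable fun n : ℕ => |x| ^ n := summable_geometric_of_lt_one (abs_nonneg x) hx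
  exact Summable.of_norm (Summable.of_nonneg_of_le (fun n => norm_nonneg _) hb hg)

lemma summable_T {x : ℝ} (hx : |x| < 1) : Summable fun n : ℤ => x ^ T n := by
  have hnat : Summable fun n : ℕ => x ^ T (n : ℤ) := summable_of_exp_ge hx _ T_ge
  have hneg : Summable fun n : ℕ => x ^ T (-((n : ℤ) + 1)) := by
    simpa only [T_neg] using hnat
  exact Summable.of_nat_of_neg_add_one hnat hneg

lemma summable_S {x : ℝ} (hx : |x| < 1) : Summable fun n : ℤ => x ^ S n := by
  have hnat : Summable fun n : ℕ => x ^ S (n : ℤ) :=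
    summable_of_exp_ge hx _ (fun n => by simpa using S_ge (n : ℤ))
  have hneg : Summable fun n : ℕ => x ^ S (-((n : ℤ) + 1)) :=
    summable_of_exp_ge hx _ (fun n => le_trans (by simp; omega) (S_ge (-((n : ℤ) + 1))))
  exact Summable.of_nat_of_neg_add_one hnat hneg


noncomputable def FF (x : ℝ) : ℝ := ∑' n : ℤ, x ^ T n
noncomputable def G3 (x : ℝ) : ℝ := ∑' n : ℤ, x ^ S n

lemma summable_norm_T {x : ℝ} (hx : |x| < 1) : Summable fun n : ℤ => ‖x ^ T n‖ := by
  have : Summable fun n : ℤ => |x| ^ T n := summable_T (by rwa [abs_abs])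
  simpa [Real.norm_eq_abs, abs_pow] using this

lemma summable_norm_S {x : ℝ} (hx : |x| < 1) : Summable fun n : ℤ => ‖x ^ S n‖ := by
  have : Summable fun n : ℤ => |x| ^ S n := summable_S (by rwa [abs_abs])
  simpa [Real.norm_eq_abs, abs_pow] using this

/-- the set of pairs with even coordinate difference -/
def Epar : Set (ℤ × ℤ) := {p : ℤ × ℤ | Even (p.1 - p.2)}

def e1 : (ℤ × ℤ) ≃ ↥Epar where
  toFun := fun p => ⟨(p.1 + p.2, p.1 - p.2), ⟨p.2, by dsimp; ring⟩⟩
  invFun := fun p => (((p : ℤ × ℤ).1 + (p : ℤ × ℤ).2) / 2, ((p : ℤ × ℤ).1 - (p : ℤ × ℤ).2) / 2)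
  left_inv := by
    rintro ⟨j, k⟩
    simp only [Prod.mk.injEq]
    constructor <;> omega
  right_inv := by
    rintro ⟨⟨n, m⟩, hp⟩
    obtain ⟨r, hr⟩ := hp
    apply Subtype.ext
    simp only [Prod.mk.injEq]
    constructor <;> omega

def e2 : (ℤ × ℤ) ≃ ↥(Eparᶜ) where
  toFun := fun p => ⟨(p.1 + p.2, p.1 - p.2 - 1), by
    rintro ⟨r, hr⟩
    simp only at hr
    omega⟩
  invFun := fun p => (((p : ℤ × ℤ).1 + (p : ℤ × ℤ).2 + 1) / 2,
    ((p : ℤ × ℤ).1 - (p : ℤ × ℤ).2 - 1) / 2)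
  left_inv := by
    rintro ⟨j, k⟩
    simp only [Prod.mk.injEq]
    constructor <;> omega
  right_inv := by
    rintro ⟨⟨n, m⟩, hp⟩
    have hodd : ¬ Even ((n : ℤ) - m) := hp
    rw [Int.not_even_iff_odd] at hodd
    obtain ⟨r, hr⟩ := hodd
    apply Subtype.ext
    simp only [Prod.mk.injEq]
    constructor <;> omega

lemma identA {q : ℝ} (hq : |q| < 1) : FF q ^ 2 = 2 * (FF (q ^ 2) * G3 q) := by
  have hq2 : |q ^ 2| < 1 := by
    rw [abs_pow]; exact pow_lt_one₀ (abs_nonneg q) hq (by norm_num)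
  have hnT := summable_norm_T hq
  have hnT2 := summable_norm_T hq2
  have hnS := summable_norm_S hq
  set f : ℤ × ℤ → ℝ := fun p => q ^ T p.1 * q ^ T p.2 with hf
  have hFsum : Summable f := by
    apply Summable.of_norm
    have := hnT.mul_of_nonneg hnT (fun _ => norm_nonneg _) (fun _ => norm_nonneg _)
    simpa [hf, norm_mul] using this
  have hprod : FF q ^ 2 = ∑' p : ℤ × ℤ, f p := by
    rw [sq, FF]
    exact tsum_mul_tsum_of_summable_norm hnT hnT
  have hsplit : (∑' p : ↥Epar, f p) + (∑' p : ↥(Eparᶜ), f p) = ∑' p : ℤ × ℤ, f p :=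
    Summable.tsum_add_tsum_compl (hFsum.subtype _) (hFsum.subtype _)
  have heven : (∑' p : ↥Epar, f p) = FF (q ^ 2) * G3 q := by
    rw [← e1.tsum_eq (fun p : ↥Epar => f ↑p)]
    have hterm : ∀ jk : ℤ × ℤ, f ↑(e1 jk) = (q ^ 2) ^ T jk.1 * q ^ S jk.2 := by
      rintro ⟨j, k⟩
      show q ^ T (j + k) * q ^ T (j - k) = _
      rw [← pow_add, E1, pow_add, pow_mul]
    rw [tsum_congr hterm]
    exact (tsum_mul_tsum_of_summable_norm hnT2 hnS).symm
  have hodd : (∑' p : ↥(Eparᶜ), f p) = G3 q * FF (q ^ 2) := by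
    rw [← e2.tsum_eq (fun p : ↥(Eparᶜ) => f ↑p)]
    have hterm : ∀ jk : ℤ × ℤ, f ↑(e2 jk) = q ^ S jk.1 * (q ^ 2) ^ T jk.2 := by
      rintro ⟨j, k⟩
      show q ^ T (j + k) * q ^ T (j - k - 1) = _
      rw [← pow_add, E2, pow_add, pow_mul]
    rw [tsum_congr hterm]
    exact (tsum_mul_tsum_of_summable_norm hnS hnT2).symm
  rw [hprod, ← hsplit, heven, hodd]
  ring

def w : (ℤ × ℤ) ≃ (ℤ × ℤ) where
  toFun := fun p => (p.1, -p.2 - 1)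
  invFun := fun p => (p.1, -p.2 - 1)
  left_inv := by intro p; ext <;> dsimp <;> omega
  right_inv := by intro p; ext <;> dsimp <;> omega

lemma identB {u : ℝ} (hu : |u| < 1) : G3 (-u) * G3 u = G3 (-(u ^ 2)) ^ 2 := by
  have hu2 : |(-(u ^ 2))| < 1 := by
    rw [abs_neg, abs_pow]; exact pow_lt_one₀ (abs_nonneg u) hu (by norm_num)
  have hnu : |(-u)| < 1 := by rwa [abs_neg]
  have hnSu := summable_norm_S hu
  have hnSnu := summable_norm_S hnu
  have hnS2 := summable_norm_S hu2
  set f : ℤ × ℤ → ℝ := fun p => (-u) ^ S p.1 * u ^ S p.2 with hf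
  have hFsum : Summable f := by
    apply Summable.of_norm
    have := hnSnu.mul_of_nonneg hnSu (fun _ => norm_nonneg _) (fun _ => norm_nonneg _)
    simpa [hf, norm_mul] using this
  have hprod : G3 (-u) * G3 u = ∑' p : ℤ × ℤ, f p := by
    rw [G3, G3]
    exact tsum_mul_tsum_of_summable_norm hnSnu hnSu
  have hsplit : (∑' p : ↥Epar, f p) + (∑' p : ↥(Eparᶜ), f p) = ∑' p : ℤ × ℤ, f p :=
    Summable.tsum_add_tsum_compl (hFsum.subtype _) (hFsum.subtype _)
  have heven : (∑' p : ↥Epar, f p) = G3 (-(u ^ 2)) ^ 2 := by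
    rw [← e1.tsum_eq (fun p : ↥Epar => f ↑p)]
    have hterm : ∀ jk : ℤ × ℤ,
        f ↑(e1 jk) = (-(u ^ 2)) ^ S jk.1 * (-(u ^ 2)) ^ S jk.2 := by
      rintro ⟨r, s⟩
      show (-u) ^ S (r + s) * u ^ S (r - s) = _
      rw [neg_pow_S, neg_pow_S, neg_pow_S]
      have hsign : ((-1 : ℝ)) ^ (r + s).natAbs
          = ((-1 : ℝ)) ^ r.natAbs * ((-1 : ℝ)) ^ s.natAbs := by
        rw [neg_one_pow_natAbs, neg_one_pow_natAbs, neg_one_pow_natAbs]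
        split_ifs with h1 h2 h3 h2 h3 h3 <;>
          simp_all [Int.even_iff] <;> omega
      have hexp : u ^ S (r + s) * u ^ S (r - s)
          = (u ^ 2) ^ S r * (u ^ 2) ^ S s := by
        rw [← pow_add, E3, pow_add, pow_mul, pow_mul]
      calc ((-1 : ℝ)) ^ (r + s).natAbs * u ^ S (r + s) * u ^ S (r - s)
          = ((-1 : ℝ)) ^ (r + s).natAbs * (u ^ S (r + s) * u ^ S (r - s)) := by ring
        _ = (((-1 : ℝ)) ^ r.natAbs * ((-1 : ℝ)) ^ s.natAbs)
              * ((u ^ 2) ^ S r * (u ^ 2) ^ S s) := by rw [hsign, hexp]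
        _ = ((-1 : ℝ)) ^ r.natAbs * (u ^ 2) ^ S r
              * (((-1 : ℝ)) ^ s.natAbs * (u ^ 2) ^ S s) := by ring
    rw [tsum_congr hterm]
    exact ((tsum_mul_tsum_of_summable_norm hnS2 hnS2).symm).trans (sq _).symm
  have hodd : (∑' p : ↥(Eparᶜ), f p) = 0 := by
    rw [← e2.tsum_eq (fun p : ↥(Eparᶜ) => f ↑p)]
    set g : ℤ × ℤ → ℝ := fun jk => f ↑(e2 jk) with hg
    have hanti : ∀ jk : ℤ × ℤ, g (w jk) = - g jk := by
      rintro ⟨j, k⟩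
      show f ↑(e2 (j, -k - 1)) = - f ↑(e2 (j, k))
      show (-u) ^ S (j + (-k - 1)) * u ^ S (j - (-k - 1) - 1)
        = -((-u) ^ S (j + k) * u ^ S (j - k - 1))
      have h1 : j + (-k - 1) = j - k - 1 := by ring
      have h2 : j - (-k - 1) - 1 = j + k := by ring
      rw [h1, h2, neg_pow_S, neg_pow_S]
      have hsign : ((-1 : ℝ)) ^ (j - k - 1).natAbs = -((-1 : ℝ)) ^ (j + k).natAbs := by
        rw [neg_one_pow_natAbs, neg_one_pow_natAbs]
        split_ifs with h1 h2 h2 <;> simp_all [Int.even_iff, Int.odd_iff] <;> omega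
      rw [hsign]
      ring
    have : (∑' jk : ℤ × ℤ, g jk) = - ∑' jk : ℤ × ℤ, g jk := by
      conv_lhs => rw [← w.tsum_eq g]
      rw [tsum_congr hanti, tsum_neg]
    linarith [this]
  rw [hprod, ← hsplit, heven, hodd]
  ring


lemma G3_pos_of_nonneg {x : ℝ} (h0 : 0 ≤ x) (h1 : x < 1) : 0 < G3 x := by
  have hs := summable_S (x := x) (by rwa [abs_of_nonneg h0])
  refine Summable.tsum_pos hs (fun n => pow_nonneg h0 _) 0 ?_
  norm_num [S]

lemma FF_pos_of_nonneg {x : ℝ} (h0 : 0 ≤ x) (h1 : x < 1) : 0 < FF x := by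
  have hs := summable_T (x := x) (by rwa [abs_of_nonneg h0])
  refine Summable.tsum_pos hs (fun n => pow_nonneg h0 _) 0 ?_
  norm_num [T]

lemma G3_sub_one_bound {x : ℝ} (hx : |x| < 1) :
    |G3 x - 1| ≤ 2 * (|x| / (1 - |x|)) := by
  have hx0 : (0:ℝ) ≤ |x| := abs_nonneg x
  have hs := summable_S hx
  have hsplit : G3 x = x ^ S 0 + ∑' n : ℤ, if n = 0 then 0 else x ^ S n :=
    Summable.tsum_eq_add_tsum_ite hs 0
  have hS0 : x ^ S 0 = 1 := by norm_num [S]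
  set v : ℤ → ℝ := fun n => if n = 0 then 0 else |x| ^ n.natAbs with hv
  have hv_nonneg : ∀ n : ℤ, 0 ≤ v n := by
    intro n; rw [hv]; dsimp only; split_ifs
    · exact le_refl 0
    · positivity
  have hv_bound : ∀ n : ℤ, ‖if n = 0 then 0 else x ^ S n‖ ≤ v n := by
    intro n; rw [hv]; dsimp only; split_ifs with h
    · simp
    · rw [Real.norm_eq_abs, abs_pow]
      exact pow_le_pow_of_le_one hx0 hx.le (S_ge n)
  have hvs : Summable v := by
    have hgeo : Summable fun n : ℤ => |x| ^ n.natAbs := by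
      have h1 : Summable fun n : ℕ => |x| ^ ((n:ℤ)).natAbs := by
        simpa using summable_geometric_of_lt_one hx0 hx
      have h2 : Summable fun n : ℕ => |x| ^ ((-((n:ℤ) + 1))).natAbs := by
        have he : ∀ n : ℕ, ((-((n:ℤ) + 1))).natAbs = n + 1 := by intro n; omega
        simp only [he]
        exact (summable_geometric_of_lt_one hx0 hx).comp_injective (add_left_injective 1)
      exact Summable.of_nat_of_neg_add_one h1 h2
    apply Summable.of_nonneg_of_le hv_nonneg (fun n => ?_) hgeo
    rw [hv]; dsimp only; split_ifs
    · positivity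
    · exact le_refl _
  have hns : Summable fun n : ℤ => ‖if n = 0 then 0 else x ^ S n‖ :=
    Summable.of_nonneg_of_le (fun n => norm_nonneg _) hv_bound hvs
  have htail : |∑' n : ℤ, if n = 0 then 0 else x ^ S n| ≤ ∑' n : ℤ, v n :=
    le_trans (norm_tsum_le_tsum_norm hns) (Summable.tsum_le_tsum hv_bound hns hvs)
  have hgeo1 : Summable fun n : ℕ => |x| ^ (n + 1) :=
    (summable_geometric_of_lt_one hx0 hx).comp_injective (add_left_injective 1)
  have hgeo1_val : ∑' n : ℕ, |x| ^ (n + 1) = |x| / (1 - |x|) := by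
    calc ∑' n : ℕ, |x| ^ (n + 1) = ∑' n : ℕ, |x| * |x| ^ n :=
          tsum_congr fun n => by rw [pow_succ']
      _ = |x| * ∑' n : ℕ, |x| ^ n := tsum_mul_left
      _ = |x| / (1 - |x|) := by
          rw [tsum_geometric_of_lt_one hx0 hx, div_eq_mul_inv]
  have hpos : ∀ n : ℕ, v (-((n:ℤ) + 1)) = |x| ^ (n + 1) := by
    intro n
    have h1 : (-((n:ℤ) + 1)) ≠ 0 := by omega
    have h2 : ((-((n:ℤ) + 1))).natAbs = n + 1 := by omega
    rw [hv]; dsimp only; rw [if_neg h1, h2]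
  have hnat0 : v (0:ℤ) = 0 := by rw [hv]; simp
  have hnatsucc : ∀ n : ℕ, v (((n:ℕ):ℤ) + 1) = |x| ^ (n + 1) := by
    intro n
    have h1 : ((n:ℤ) + 1) ≠ 0 := by omega
    have h2 : (((n:ℤ) + 1)).natAbs = n + 1 := by omega
    rw [hv]; dsimp only; rw [if_neg h1, h2]
  have hsum2 : Summable fun n : ℕ => v (-((n:ℤ) + 1)) := by
    simpa only [hpos] using hgeo1
  have hsum1 : Summable fun n : ℕ => v ((n:ℤ)) := by
    apply Summable.of_nonneg_of_le (fun n => hv_nonneg _) (fun n => ?_)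
      (summable_geometric_of_lt_one hx0 hx)
    rw [hv]; dsimp only; split_ifs
    · positivity
    · have : ((n:ℤ)).natAbs = n := by omega
      rw [this]
  have hcombine : ∑' n : ℤ, v n
      = ∑' n : ℕ, (v ((n:ℤ)) + v (-((n:ℤ) + 1))) := (tsum_nat_add_neg_add_one hvs).symm
  have hb1 : ∑' n : ℕ, v ((n:ℤ)) = |x| / (1 - |x|) := by
    rw [Summable.tsum_eq_zero_add hsum1]
    push_cast
    rw [hnat0, tsum_congr hnatsucc, hgeo1_val, zero_add]
  have hb2 : ∑' n : ℕ, v (-((n:ℤ) + 1)) = |x| / (1 - |x|) := by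
    rw [tsum_congr hpos, hgeo1_val]
  have hvval : ∑' n : ℤ, v n ≤ 2 * (|x| / (1 - |x|)) := by
    rw [hcombine, Summable.tsum_add hsum1 hsum2, hb1, hb2]
    linarith
  rw [hsplit, hS0]
  have heq : |1 + (∑' n : ℤ, if n = 0 then 0 else x ^ S n) - 1|
      = |∑' n : ℤ, if n = 0 then 0 else x ^ S n| := by ring_nf
  rw [heq]
  linarith

lemma G3_pos_of_small {x : ℝ} (hx : |x| < 1/3) : 0 < G3 x := by
  have hx1 : |x| < 1 := lt_trans hx (by norm_num)
  have h := G3_sub_one_bound hx1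
  have h2 : |x| / (1 - |x|) < 1/2 := by
    rw [div_lt_iff₀ (by linarith [abs_nonneg x])]
    linarith [abs_nonneg x]
  have h3 := abs_le.mp h
  linarith [h3.1, h3.2]

lemma G3_neg_pos {t : ℝ} (h0 : 0 < t) (h1 : t < 1) : 0 < G3 (-t) := by
  have key : ∀ k : ℕ, ∀ s : ℝ, 0 < s → s < 1 → 0 < G3 (-(s ^ (2 ^ k))) → 0 < G3 (-s) := by
    intro k
    induction k with
    | zero => intro s hs0 hs1 h; simpa using h
    | succ k ih =>
      intro s hs0 hs1 h
      apply ih s hs0 hs1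
      set u := s ^ (2 ^ k) with hu
      have hu0 : 0 < u := pow_pos hs0 _
      have hu1 : u < 1 := pow_lt_one₀ hs0.le hs1 (by positivity)
      have hB := identB (u := u) (by rwa [abs_of_nonneg hu0.le])
      have hG3u : 0 < G3 u := G3_pos_of_nonneg hu0.le hu1
      have hsq : u ^ 2 = s ^ (2 ^ (k + 1)) := by
        rw [hu, ← pow_mul, ← pow_succ]
      have hpos : 0 < G3 (-(u ^ 2)) ^ 2 := by
        rw [hsq]; exact pow_pos h 2
      rw [← hB] at hpos
      by_contra hle
      push_neg at hle
      nlinarith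
  obtain ⟨k, hk⟩ : ∃ k : ℕ, t ^ (2 ^ k) < 1/3 := by
    obtain ⟨n, hn⟩ := exists_pow_lt_of_lt_one (by norm_num : (0:ℝ) < 1/3) h1
    exact ⟨n, lt_of_le_of_lt
      (pow_le_pow_of_le_one h0.le h1.le (Nat.le_of_lt (Nat.lt_two_pow_self (n := n)))) hn⟩
  apply key k t h0 h1
  apply G3_pos_of_small
  rw [abs_neg, abs_of_nonneg (pow_pos h0 _).le]
  exact hk

lemma FF_ne_zero {q : ℝ} (h1 : -1 < q) (h2 : q < 0) : FF q ≠ 0 := by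
  have hqa : |q| < 1 := abs_lt.mpr ⟨h1, by linarith⟩
  have hA := identA hqa
  have hq21 : q ^ 2 < 1 := by nlinarith
  have hFF2 : 0 < FF (q ^ 2) := FF_pos_of_nonneg (sq_nonneg q) hq21
  have hG3 : 0 < G3 q := by
    have hq' : q = -(-q) := by ring
    rw [hq']
    exact G3_neg_pos (by linarith) (by linarith)
  intro h0
  rw [h0] at hA
  nlinarith

lemma FF_eq {q : ℝ} (hq : |q| < 1) :
    FF q = 2 * ∑' n : ℕ, q ^ (n * (n + 1) / 2) := by
  have hs := summable_T hq
  rw [FF, ← tsum_nat_add_neg_add_one hs]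
  have hterm : ∀ n : ℕ, q ^ T ((n:ℤ)) + q ^ T (-((n:ℤ) + 1))
      = 2 * q ^ (n * (n + 1) / 2) := by
    intro n
    rw [T_neg, T_coe]
    ring
  rw [tsum_congr hterm, tsum_mul_left]

lemma cont_at {q0 : ℝ} (h : |q0| < 1) :
    ContinuousAt (fun q : ℝ => ∑' n : ℕ, q ^ (n * (n + 1) / 2)) q0 := by
  set r : ℝ := (1 + |q0|) / 2 with hr
  have h0 : 0 ≤ |q0| := abs_nonneg q0
  have hr1 : r < 1 := by rw [hr]; linarith
  have hr0 : 0 ≤ r := by rw [hr]; linarith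
  have hq0r : |q0| < r := by rw [hr]; linarith
  have hco : ContinuousOn (fun q : ℝ => ∑' n : ℕ, q ^ (n * (n + 1) / 2))
      (Set.Icc (-r) r) := by
    apply continuousOn_tsum (u := fun n : ℕ => r ^ n)
    · intro i
      exact (continuous_pow _).continuousOn
    · exact summable_geometric_of_lt_one hr0 hr1
    · intro n x hx
      rw [Real.norm_eq_abs, abs_pow]
      have hxr : |x| ≤ r := abs_le.mpr ⟨hx.1, hx.2⟩
      have hTn : n ≤ n * (n + 1) / 2 := by
        have := T_ge n
        rwa [T_coe] at this
      calc |x| ^ (n * (n + 1) / 2) ≤ r ^ (n * (n + 1) / 2) :=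
            pow_le_pow_left₀ (abs_nonneg x) hxr _
        _ ≤ r ^ n := pow_le_pow_of_le_one hr0 hr1.le hTn
  apply hco.continuousAt
  apply Icc_mem_nhds
  · linarith [(abs_lt.mp hq0r).1]
  · exact (abs_lt.mp hq0r).2


end ThetaAux

noncomputable def thetaR (q x : ℝ) : ℝ := ∑' j : ℕ, q ^ (j * (j + 1) / 2) * x ^ j

theorem theta_pos_at_one (q : ℝ) (hq : q ∈ Set.Ioo (-1 : ℝ) 0) :
    0 < thetaR q 1 := by
  obtain ⟨h1, h2⟩ := hq
  set g : ℝ → ℝ := fun x => ∑' n : ℕ, x ^ (n * (n + 1) / 2) with hgdef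
  have hth : ∀ x : ℝ, thetaR x 1 = g x := by
    intro x
    unfold thetaR
    rw [hgdef]
    exact tsum_congr fun n => by rw [one_pow, mul_one]
  have hne : ∀ x : ℝ, -1 < x → x < 0 → g x ≠ 0 := by
    intro x hx1 hx2 hzero
    have hxa : |x| < 1 := abs_lt.mpr ⟨hx1, by linarith⟩
    apply ThetaAux.FF_ne_zero hx1 hx2
    rw [ThetaAux.FF_eq hxa,
      show (∑' n : ℕ, x ^ (n * (n + 1) / 2)) = 0 from hzero]
    ring
  have hg0 : g 0 = 1 := by
    show (∑' n : ℕ, (0:ℝ) ^ (n * (n + 1) / 2)) = 1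
    rw [tsum_eq_single 0 ?_]
    · norm_num
    · intro n hn
      apply zero_pow
      have h := ThetaAux.T_ge n
      rw [ThetaAux.T_coe] at h
      omega
  by_contra hnot
  push_neg at hnot
  rw [hth q] at hnot
  have hgq : g q < 0 := lt_of_le_of_ne hnot (hne q h1 h2)
  have hcont : ContinuousOn g (Set.Icc q 0) := by
    intro x hx
    have hxa : |x| < 1 := abs_lt.mpr ⟨by linarith [hx.1], by linarith [hx.2]⟩
    exact (ThetaAux.cont_at hxa).continuousWithinAt
  have hIVT := intermediate_value_Icc h2.le hcont
  have h0mem : (0:ℝ) ∈ Set.Icc (g q) (g 0) := by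
    rw [hg0]
    exact ⟨hgq.le, by norm_num⟩
  obtain ⟨c, hc, hgc⟩ := hIVT h0mem
  have hc0 : c ≠ 0 := by
    intro h
    rw [h, hg0] at hgc
    norm_num at hgc
  exact hne c (by linarith [hc.1]) (lt_of_le_of_ne hc.2 hc0) hgc
end

section
/- For every q ∈ (-1, 0) and every x ∈ [-1, 0], one has θ(q,x) > 0. In particular θ(q,·) has no zero in [-1,0]. -/
theorem theta_pos_on_Icc (q : ℝ) (hq : q ∈ Set.Ioo (-1 : ℝ) 0)
    (x : ℝ) (hx : x ∈ Set.Icc (-1 : ℝ) 0) :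
    0 < thetaR q x := by
  obtain ⟨hq1, hq0⟩ := hq
  obtain ⟨hx1, hx0⟩ := hx
  set a : ℝ := -q with ha
  set b : ℝ := -x with hb
  have ha0 : 0 < a := by simp only [ha]; linarith
  have ha1 : a < 1 := by simp only [ha]; linarith
  have hb0 : 0 ≤ b := by simp only [hb]; linarith
  have hb1 : b ≤ 1 := by simp only [hb]; linarith
  have hqa : q = -a := by simp [ha]
  have hxb : x = -b := by simp [hb]
  set f : ℕ → ℝ := fun j => q ^ (j * (j + 1) / 2) * x ^ j with hfdef
  have hteq : thetaR q x = ∑' j, f j := rfl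
  -- exponent computations
  have hT0 : ∀ n : ℕ, (4*n) * ((4*n) + 1) / 2 = 8*n^2+2*n := by
    intro n
    have h : (4*n) * ((4*n) + 1) = 2*(8*n^2+2*n) := by ring
    rw [h, Nat.mul_div_cancel_left _ (by norm_num : 0 < 2)]
  have hT1 : ∀ n : ℕ, (4*n+1) * ((4*n+1) + 1) / 2 = 8*n^2+6*n+1 := by
    intro n
    have h : (4*n+1) * ((4*n+1) + 1) = 2*(8*n^2+6*n+1) := by ring
    rw [h, Nat.mul_div_cancel_left _ (by norm_num : 0 < 2)]
  have hT2 : ∀ n : ℕ, (4*n+2) * ((4*n+2) + 1) / 2 = 8*n^2+10*n+3 := by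
    intro n
    have h : (4*n+2) * ((4*n+2) + 1) = 2*(8*n^2+10*n+3) := by ring
    rw [h, Nat.mul_div_cancel_left _ (by norm_num : 0 < 2)]
  have hT3 : ∀ n : ℕ, (4*n+3) * ((4*n+3) + 1) / 2 = 8*n^2+14*n+6 := by
    intro n
    have h : (4*n+3) * ((4*n+3) + 1) = 2*(8*n^2+14*n+6) := by ring
    rw [h, Nat.mul_div_cancel_left _ (by norm_num : 0 < 2)]
  -- values of f on residues mod 4
  have hf0 : ∀ n : ℕ, f (4*n) = a^(8*n^2+2*n) * b^(4*n) := by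
    intro n
    simp only [hfdef]
    rw [hT0 n, hqa, hxb,
      Even.neg_pow ⟨4*n^2+n, by ring⟩ a,
      Even.neg_pow ⟨2*n, by ring⟩ b]
  have hf1 : ∀ n : ℕ, f (4*n+1) = a^(8*n^2+6*n+1) * b^(4*n+1) := by
    intro n
    simp only [hfdef]
    rw [hT1 n, hqa, hxb,
      Odd.neg_pow ⟨4*n^2+3*n, by ring⟩ a,
      Odd.neg_pow ⟨2*n, by ring⟩ b]
    ring
  have hf2 : ∀ n : ℕ, f (4*n+2) = -(a^(8*n^2+10*n+3) * b^(4*n+2)) := by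
    intro n
    simp only [hfdef]
    rw [hT2 n, hqa, hxb,
      Odd.neg_pow ⟨4*n^2+5*n+1, by ring⟩ a,
      Even.neg_pow ⟨2*n+1, by ring⟩ b]
    ring
  have hf3 : ∀ n : ℕ, f (4*n+3) = -(a^(8*n^2+14*n+6) * b^(4*n+3)) := by
    intro n
    simp only [hfdef]
    rw [hT3 n, hqa, hxb,
      Even.neg_pow ⟨4*n^2+7*n+3, by ring⟩ a,
      Odd.neg_pow ⟨2*n+1, by ring⟩ b]
    ring
  -- monotonicity helper
  have key : ∀ (m m' k k' : ℕ), m ≤ m' → k ≤ k' → a^m' * b^k' ≤ a^m * b^k := by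
    intro m m' k k' hm hk
    exact mul_le_mul (pow_le_pow_of_le_one ha0.le ha1.le hm)
      (pow_le_pow_of_le_one hb0 hb1 hk) (pow_nonneg hb0 _) (pow_nonneg ha0.le _)
  -- each group of 4 consecutive terms is nonnegative
  have hg : ∀ n : ℕ, 0 ≤ f (4*n) + f (4*n+1) + f (4*n+2) + f (4*n+3) := by
    intro n
    rw [hf0 n, hf1 n, hf2 n, hf3 n]
    have h1 := key (8*n^2+2*n) (8*n^2+10*n+3) (4*n) (4*n+2) (by omega) (by omega)
    have h2 := key (8*n^2+6*n+1) (8*n^2+14*n+6) (4*n+1) (4*n+3) (by omega) (by omega)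
    linarith
  set c : ℝ := 1 - a^6 with hc
  have hcpos : 0 < c := by
    have : a^6 < 1 := pow_lt_one₀ ha0.le ha1 (by norm_num)
    simp only [hc]; linarith
  -- the first group is at least c
  have hbase : c ≤ f 0 + f 1 + f 2 + f 3 := by
    have h0 := hf0 0
    have h1 := hf1 0
    have h2 := hf2 0
    have h3 := hf3 0
    norm_num at h0 h1 h2 h3
    rw [h0, h1, h2, h3]
    have k1 := key 1 3 1 2 (by norm_num) (by norm_num)
    have k2 := key 6 6 0 3 (le_refl _) (by norm_num)
    simp only [pow_zero, mul_one, pow_one] at k1 k2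
    simp only [hc]
    linarith
  -- partial sums
  set S : ℕ → ℝ := fun n => ∑ j ∈ Finset.range n, f j with hS
  have hstep : ∀ n : ℕ, S (4*n+4) = S (4*n) + (f (4*n) + f (4*n+1) + f (4*n+2) + f (4*n+3)) := by
    intro n
    simp only [hS]
    rw [show 4*n+4 = (4*n+3)+1 by omega, Finset.sum_range_succ,
      show 4*n+3 = (4*n+2)+1 by omega, Finset.sum_range_succ,
      show 4*n+2 = (4*n+1)+1 by omega, Finset.sum_range_succ,
      show 4*n+1 = (4*n)+1 by omega, Finset.sum_range_succ]
    ring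
  have hSge : ∀ n : ℕ, c ≤ S (4*(n+1)) := by
    intro n
    induction n with
    | zero =>
      have h := hstep 0
      simp only [Nat.mul_zero, Nat.zero_add, Nat.add_zero] at h
      have hS0 : S 0 = 0 := by simp [hS]
      rw [show 4*(0+1) = 4 by norm_num]
      rw [show (4:ℕ) = 4*0+4 by norm_num, hstep 0, hS0]
      simpa using hbase
    | succ m ih =>
      have h := hstep (m+1)
      have hgm := hg (m+1)
      rw [show 4*(m+1+1) = 4*(m+1)+4 by ring, h]
      linarith
  -- summability
  have habsq : |q| = a := abs_of_neg hq0
  have habsx : |x| = b := by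
    rcases eq_or_lt_of_le hx0 with h | h
    · simp [← h, hb]
    · exact abs_of_neg h
  have hle : ∀ j : ℕ, ‖f j‖ ≤ a ^ j := by
    intro j
    have hTj : j ≤ j*(j+1)/2 := by
      rcases j with _ | k
      · simp
      · have h2 : (k+1)*2 ≤ (k+1)*((k+1)+1) :=
          Nat.mul_le_mul (le_refl (k+1)) (by omega : 2 ≤ (k+1)+1)
        omega
    calc ‖f j‖ = |q|^(j*(j+1)/2) * |x|^j := by
          simp [hfdef, abs_mul, abs_pow]
      _ = a^(j*(j+1)/2) * b^j := by rw [habsq, habsx]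
      _ ≤ a^j * b^0 := key j (j*(j+1)/2) 0 j hTj (Nat.zero_le _)
      _ = a^j := by simp
  have hsum : Summable f :=
    Summable.of_norm (Summable.of_nonneg_of_le (fun j => norm_nonneg _) hle
      (summable_geometric_of_lt_one ha0.le ha1))
  have htend : Filter.Tendsto S Filter.atTop (nhds (thetaR q x)) := by
    rw [hteq]
    exact hsum.hasSum.tendsto_sum_nat
  have hmono : Filter.Tendsto (fun n : ℕ => 4*(n+1)) Filter.atTop Filter.atTop :=
    Filter.tendsto_atTop_atTop.mpr fun b => ⟨b, fun n hn => by omega⟩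
  have htend4 : Filter.Tendsto (fun n : ℕ => S (4*(n+1))) Filter.atTop (nhds (thetaR q x)) :=
    htend.comp hmono
  have hfin : c ≤ thetaR q x := ge_of_tendsto' htend4 hSge
  linarith
end

section
/- For q ∈ (-1,0) and y ∈ ℝ, the real part of θ(q, iy) is strictly positive; hence θ(q,·) has no zero on the imaginary axis. -/
open Complex Filter

noncomputable def theta (q x : ℂ) : ℂ := ∑' j : ℕ, q ^ (j * (j + 1) / 2) * x ^ j

lemma tri_succ (n : ℕ) : (n+1) * (n+2) / 2 = n * (n+1) / 2 + (n+1) := by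
  obtain ⟨m, hm⟩ := Nat.even_mul_succ_self n
  have hb : (n+1) * (n+2) = n * (n+1) + 2*(n+1) := by ring
  omega

lemma summable_F (q : ℝ) (hq : q ∈ Set.Ioo (-1 : ℝ) 0) (y : ℝ) :
    Summable (fun j : ℕ => (q : ℂ) ^ (j * (j + 1) / 2) * (Complex.I * (y : ℂ)) ^ j) := by
  have hql : |q| < 1 := abs_lt.2 ⟨hq.1, hq.2.trans zero_lt_one⟩
  have hq0 : (0:ℝ) ≤ |q| := abs_nonneg q
  apply summable_of_ratio_norm_eventually_le (r := 1/2) (by norm_num)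
  have htend : Tendsto (fun n : ℕ => |q| ^ (n+1) * |y|) atTop (nhds 0) := by
    have := (tendsto_pow_atTop_nhds_zero_of_lt_one hq0 hql).comp (tendsto_add_atTop_nat 1)
    simpa using this.mul_const |y|
  filter_upwards [htend.eventually_le_const (by norm_num : (0:ℝ) < 1/2)] with n hn
  have hnorm : ∀ m : ℕ, ‖(q : ℂ) ^ (m * (m + 1) / 2) * (Complex.I * (y : ℂ)) ^ m‖
      = |q| ^ (m * (m + 1) / 2) * |y| ^ m := by
    intro m
    simp [norm_mul, norm_pow, Complex.norm_real, Real.norm_eq_abs, Complex.norm_I]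
  rw [hnorm, hnorm, tri_succ, pow_add]
  calc |q| ^ (n * (n + 1) / 2) * |q| ^ (n+1) * |y| ^ (n + 1)
      = (|q| ^ (n+1) * |y|) * (|q| ^ (n * (n + 1) / 2) * |y| ^ n) := by ring
    _ ≤ (1/2) * (|q| ^ (n * (n + 1) / 2) * |y| ^ n) := by
        apply mul_le_mul_of_nonneg_right hn (by positivity)

theorem theta_re_pos_on_imaginary_axis (q : ℝ) (hq : q ∈ Set.Ioo (-1 : ℝ) 0) (y : ℝ) :
    0 < (theta (q : ℂ) (Complex.I * (y : ℂ))).re := by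
  have hF := summable_F q hq y
  rw [theta, Complex.re_tsum hF]
  set g : ℕ → ℝ := fun j => q ^ (j * (j + 1) / 2) * ((Complex.I * (y : ℂ)) ^ j).re with hg
  have hre : ∀ j : ℕ, ((q : ℂ) ^ (j * (j + 1) / 2) * (Complex.I * (y : ℂ)) ^ j).re = g j := by
    intro j
    rw [hg]
    rw [show ((q:ℂ) ^ (j*(j+1)/2)) = ((q ^ (j*(j+1)/2) : ℝ) : ℂ) by push_cast; ring,
      Complex.re_ofReal_mul]
  have hsum : Summable g := by
    have := (Complex.hasSum_re hF.hasSum).summable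
    simpa [hre] using this
  have hsq : ∀ k : ℕ, (Complex.I * (y : ℂ)) ^ (2*k) = (((-(y^2))^k : ℝ) : ℂ) := by
    intro k
    rw [pow_mul]
    push_cast
    rw [mul_pow, Complex.I_sq]
    ring
  have hnonneg : ∀ j : ℕ, 0 ≤ g j := by
    intro j
    rcases Nat.even_or_odd j with ⟨k, hk⟩ | ⟨k, hk⟩
    · subst hk
      have hkk : k + k = 2 * k := by ring
      rw [hg]
      simp only [hkk, hsq]
      have he : 2*k*(2*k+1)/2 = k*(2*k+1) := by
        rw [show 2*k*(2*k+1) = 2*(k*(2*k+1)) by ring]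
        exact Nat.mul_div_cancel_left _ (by norm_num)
      rw [he, Complex.ofReal_re]
      have h1 : q ^ (k*(2*k+1)) = (-1:ℝ)^(k*(2*k+1)) * (-q)^(k*(2*k+1)) := by
        rw [← mul_pow]; ring_nf
      have h2 : (-(y^2):ℝ)^k = (-1:ℝ)^k * (y^2)^k := by
        rw [← mul_pow]; ring_nf
      rw [h1, h2]
      have h3 : (-1:ℝ)^(k*(2*k+1)) * (-1:ℝ)^k = 1 := by
        rw [← pow_add]
        exact Even.neg_one_pow ⟨k*k + k, by ring⟩
      calc (0:ℝ) ≤ (-q)^(k*(2*k+1)) * (y^2)^k := by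
              have : (0:ℝ) ≤ -q := by linarith [hq.2]
              positivity
        _ = (-1:ℝ)^(k*(2*k+1)) * (-q)^(k*(2*k+1)) * ((-1:ℝ)^k * (y^2)^k) := by
              rw [show (-1:ℝ)^(k*(2*k+1)) * (-q)^(k*(2*k+1)) * ((-1:ℝ)^k * (y^2)^k)
                  = ((-1:ℝ)^(k*(2*k+1)) * (-1:ℝ)^k) * ((-q)^(k*(2*k+1)) * (y^2)^k) by ring,
                h3, one_mul]
    · subst hk
      have hpow : (Complex.I * (y : ℂ)) ^ (2*k+1)
          = (((-(y^2))^k : ℝ) : ℂ) * (Complex.I * (y : ℂ)) := by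
        rw [pow_succ, hsq]
      rw [hg]
      simp only [hpow, Complex.re_ofReal_mul, Complex.mul_re, Complex.I_re, Complex.I_im,
        Complex.ofReal_re, Complex.ofReal_im]
      ring_nf
      simp
  have h0 : 0 < g 0 := by simp [hg]
  rw [tsum_congr hre]
  calc (0:ℝ) < g 0 := h0
    _ ≤ ∑' j, g j := Summable.le_tsum hsum 0 (fun j _ => hnonneg j)
end

section
/- For k > 0 and q ∈ (0,1), one has φ_k(q) < 1/(1 + q^k), where φ_k(q) := Σ_{j=0}^∞ (-1)^j q^{kj + j(j-1)/2}. -/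
open Real

noncomputable def phi (k q : ℝ) : ℝ :=
  ∑' j : ℕ, (-1 : ℝ) ^ j * q ^ (k * j + j * (j - 1) / 2 : ℝ)

namespace PhiAux

noncomputable def expo (k : ℝ) (j : ℕ) : ℝ := k * j + j * (j - 1) / 2

noncomputable def trm (q k : ℝ) (j : ℕ) : ℝ := (-1 : ℝ) ^ j * q ^ expo k j

lemma phi_eq (k q : ℝ) : phi k q = ∑' j : ℕ, trm q k j := rfl

lemma expo_ge (k : ℝ) (j : ℕ) : k * j ≤ expo k j := by
  have h : (0 : ℝ) ≤ (j : ℝ) * ((j : ℝ) - 1) / 2 := by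
    rcases Nat.eq_zero_or_pos j with h | h
    · simp [h]
    · have h1 : (1 : ℝ) ≤ (j : ℝ) := by exact_mod_cast h
      nlinarith
  unfold expo; linarith

lemma expo_succ (k : ℝ) (j : ℕ) : expo k (j + 1) = k + expo (k + 1) j := by
  unfold expo; push_cast; ring

lemma expo_mono (k : ℝ) (hk : 0 ≤ k) (j : ℕ) : expo k j ≤ expo k (j + 1) := by
  unfold expo
  have : (0 : ℝ) ≤ (j : ℝ) := j.cast_nonneg
  push_cast; nlinarith

variable {q : ℝ} (hq0 : 0 < q) (hq1 : q < 1)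

section
include hq0 hq1

lemma summable_abs {k : ℝ} (hk : 0 < k) : Summable (fun j : ℕ => q ^ expo k j) := by
  have hqk1 : q ^ (k : ℝ) < 1 := Real.rpow_lt_one hq0.le hq1 hk
  have hqk0 : 0 ≤ q ^ (k : ℝ) := Real.rpow_nonneg hq0.le k
  refine Summable.of_nonneg_of_le (fun j => Real.rpow_nonneg hq0.le _)
    (fun j => ?_) (summable_geometric_of_lt_one hqk0 hqk1)
  have h2 : q ^ expo k j ≤ q ^ (k * (j : ℝ)) :=
    Real.rpow_le_rpow_of_exponent_ge hq0 hq1.le (expo_ge k j)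
  calc q ^ expo k j ≤ q ^ (k * (j : ℝ)) := h2
    _ = (q ^ (k : ℝ)) ^ j := by
          rw [Real.rpow_mul hq0.le, Real.rpow_natCast]

lemma summable_trm {k : ℝ} (hk : 0 < k) : Summable (fun j : ℕ => trm q k j) := by
  refine Summable.of_abs ?_
  have : ∀ j : ℕ, |trm q k j| = q ^ expo k j := by
    intro j
    unfold trm
    rw [abs_mul, abs_pow, abs_neg, abs_one, one_pow, one_mul,
      abs_of_nonneg (Real.rpow_nonneg hq0.le _)]
  simpa [this] using summable_abs hq0 hq1 hk

lemma phi_rec (k : ℝ) (hk : 0 < k) : phi k q = 1 - q ^ (k:ℝ) * phi (k + 1) q := by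
  rw [phi_eq, Summable.tsum_eq_zero_add (summable_trm hq0 hq1 hk)]
  have h0 : trm q k 0 = 1 := by
    unfold trm expo
    norm_num
  have hsucc : ∀ j : ℕ, trm q k (j + 1) = -(q ^ (k:ℝ)) * trm q (k + 1) j := by
    intro j
    unfold trm
    rw [expo_succ, Real.rpow_add hq0, pow_succ]
    ring
  rw [h0]
  have : ∑' j : ℕ, trm q k (j + 1) = -(q ^ (k:ℝ)) * ∑' j : ℕ, trm q (k + 1) j := by
    rw [← tsum_mul_left]
    exact tsum_congr hsucc
  rw [this, phi_eq]
  ring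

lemma phi_nonneg (k : ℝ) (hk : 0 < k) : 0 ≤ phi k q := by
  have hs := summable_trm hq0 hq1 hk
  have he : Summable (fun m : ℕ => trm q k (2 * m)) :=
    hs.comp_injective (fun a b h => by omega)
  have ho : Summable (fun m : ℕ => trm q k (2 * m + 1)) :=
    hs.comp_injective (fun a b h => by omega)
  rw [phi_eq, ← tsum_even_add_odd he ho]
  have hev : ∀ m : ℕ, trm q k (2 * m) = q ^ expo k (2 * m) := by
    intro m; unfold trm; rw [pow_mul]; norm_num
  have hod : ∀ m : ℕ, trm q k (2 * m + 1) = -(q ^ expo k (2 * m + 1)) := by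
    intro m; unfold trm; rw [pow_succ, pow_mul]; norm_num
  have h1 : ∑' m : ℕ, trm q k (2 * m + 1) = -∑' m : ℕ, q ^ expo k (2 * m + 1) := by
    rw [← tsum_neg]; exact tsum_congr hod
  have h2 : ∑' m : ℕ, trm q k (2 * m) = ∑' m : ℕ, q ^ expo k (2 * m) :=
    tsum_congr hev
  rw [h1, h2]
  have hle : ∑' m : ℕ, q ^ expo k (2 * m + 1) ≤ ∑' m : ℕ, q ^ expo k (2 * m) := by
    refine Summable.tsum_le_tsum (fun m => ?_) ?_ ?_
    · exact Real.rpow_le_rpow_of_exponent_ge hq0 hq1.le (expo_mono k hk.le (2 * m))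
    · have := (summable_abs hq0 hq1 hk).comp_injective
        (f := fun j : ℕ => q ^ expo k j) (i := fun m : ℕ => 2 * m + 1)
        (fun a b h => by simp only at h; omega)
      exact this
    · have := (summable_abs hq0 hq1 hk).comp_injective
        (f := fun j : ℕ => q ^ expo k j) (i := fun m : ℕ => 2 * m)
        (fun a b h => by simp only at h; omega)
      exact this
  linarith

lemma phi_le_one (k : ℝ) (hk : 0 < k) : phi k q ≤ 1 := by
  rw [phi_rec hq0 hq1 k hk]
  have h1 : 0 ≤ q ^ (k:ℝ) := Real.rpow_nonneg hq0.le k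
  have h2 : 0 ≤ phi (k + 1) q := phi_nonneg hq0 hq1 (k + 1) (by linarith)
  nlinarith

lemma phi_rec2 (k : ℝ) (hk : 0 < k) :
    phi k q = 1 - q ^ (k:ℝ) + q ^ (k:ℝ) * q ^ (k+1:ℝ) * phi (k + 2) q := by
  rw [phi_rec hq0 hq1 k hk, phi_rec hq0 hq1 (k+1) (by linarith)]
  have : k + 1 + 1 = k + 2 := by ring
  rw [this]; ring

lemma base (k : ℝ) (hk : 0 < k) (h : q * (1 + q ^ (k:ℝ)) < 1) :
    phi k q < 1 / (1 + q ^ (k:ℝ)) := by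
  have hx0 : 0 < q ^ (k:ℝ) := Real.rpow_pos_of_pos hq0 k
  set x := q ^ (k:ℝ) with hxdef
  have hk1 : q ^ (k+1:ℝ) = x * q := by rw [Real.rpow_add hq0, Real.rpow_one]
  have hb : phi (k + 2) q ≤ 1 := phi_le_one hq0 hq1 (k + 2) (by linarith)
  have hnn : 0 ≤ phi (k + 2) q := phi_nonneg hq0 hq1 (k + 2) (by linarith)
  have e1 := phi_rec2 hq0 hq1 k hk
  rw [← hxdef, hk1] at e1
  have hup : phi k q ≤ 1 - x + x * (x * q) := by
    rw [e1]
    nlinarith [mul_nonneg (mul_nonneg hx0.le (mul_nonneg hx0.le hq0.le)) hnn,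
      mul_nonneg (mul_nonneg hx0.le (mul_nonneg hx0.le hq0.le)) (sub_nonneg.mpr hb)]
  have hfin : 1 - x + x * (x * q) < 1 / (1 + x) := by
    rw [lt_div_iff₀ (by linarith)]
    nlinarith [mul_lt_mul_of_pos_left h (mul_pos hx0 hx0)]
  linarith

lemma step (k : ℝ) (hk : 0 < k)
    (h : phi (k + 2) q < 1 / (1 + q ^ (k+2:ℝ))) :
    phi k q < 1 / (1 + q ^ (k:ℝ)) := by
  have hx0 : 0 < q ^ (k:ℝ) := Real.rpow_pos_of_pos hq0 k
  have hx1 : q ^ (k:ℝ) < 1 := Real.rpow_lt_one hq0.le hq1 hk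
  set x := q ^ (k:ℝ) with hxdef
  have hk1 : q ^ (k+1:ℝ) = x * q := by rw [Real.rpow_add hq0, Real.rpow_one]
  have hk2 : q ^ (k+2:ℝ) = x * q * q := by
    have : (k + 2 : ℝ) = (k + 1) + 1 := by ring
    rw [this, Real.rpow_add hq0, Real.rpow_one, hk1]
  have e1 := phi_rec2 hq0 hq1 k hk
  rw [hk1] at e1
  rw [hk2] at h
  have hc : 0 < x * (x * q) := by positivity
  have h2 : phi k q < 1 - x + x * (x * q) * (1 / (1 + x * q * q)) := by
    rw [e1]
    have := mul_lt_mul_of_pos_left h hc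
    linarith
  have h3 : 1 - x + x * (x * q) * (1 / (1 + x * q * q)) ≤ 1 / (1 + x) := by
    have d1 : (0:ℝ) < 1 + x := by linarith
    have d2 : (0:ℝ) < 1 + x * q * q := by positivity
    rw [← sub_nonneg]
    have hid : 1 / (1 + x) - (1 - x + x * (x * q) * (1 / (1 + x * q * q)))
        = x ^ 2 * (1 - q) * (1 - x * q) / ((1 + x) * (1 + x * q * q)) := by
      field_simp
      ring
    rw [hid]
    have hxq : x * q < 1 := by nlinarith
    apply div_nonneg _ (by positivity)
    have := sub_nonneg.mpr hq1.le
    have := sub_nonneg.mpr hxq.le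
    positivity
  linarith

lemma iter : ∀ n : ℕ, ∀ k : ℝ, 0 < k →
    q * (1 + q ^ (k + 2 * (n:ℝ))) < 1 → phi k q < 1 / (1 + q ^ (k:ℝ)) := by
  intro n
  induction n with
  | zero => intro k hk h; simpa using base hq0 hq1 k hk (by norm_num at h; exact h)
  | succ n ih =>
      intro k hk h
      refine step hq0 hq1 k hk (ih (k + 2) (by linarith) ?_)
      have : k + 2 + 2 * (n:ℝ) = k + 2 * ((n:ℕ) + 1 : ℝ) := by ring
      rw [this]
      convert h using 3
      push_cast
      ring

end

end PhiAux

theorem phi_upper_bound (k : ℝ) (hk : 0 < k) (q : ℝ) (hq : q ∈ Set.Ioo (0 : ℝ) 1) :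
    phi k q < 1 / (1 + q ^ (k : ℝ)) := by
  obtain ⟨hq0, hq1⟩ := hq
  have heps : (0:ℝ) < 1 / q - 1 := by
    rw [sub_pos, lt_div_iff₀ hq0]; linarith
  have hq2 : q ^ 2 < 1 := by nlinarith
  obtain ⟨n, hn⟩ := exists_pow_lt_of_lt_one heps hq2
  refine PhiAux.iter hq0 hq1 n k hk ?_
  have h1 : q ^ (k + 2 * (n:ℝ)) ≤ (q ^ 2) ^ n := by
    have e1 : q ^ (2 * (n:ℝ)) = (q ^ 2) ^ n := by
      rw [show (2:ℝ) * (n:ℝ) = ((2 * n : ℕ) : ℝ) by push_cast; ring,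
        Real.rpow_natCast, pow_mul]
    calc q ^ (k + 2 * (n:ℝ)) = q ^ (k:ℝ) * q ^ (2 * (n:ℝ)) := Real.rpow_add hq0 _ _
      _ ≤ 1 * q ^ (2 * (n:ℝ)) := by
          have := Real.rpow_le_one hq0.le hq1.le hk.le
          have hpos : 0 ≤ q ^ (2 * (n:ℝ)) := Real.rpow_nonneg hq0.le _
          nlinarith
      _ = (q ^ 2) ^ n := by rw [one_mul, e1]
  have h2 : q ^ (k + 2 * (n:ℝ)) < 1 / q - 1 := lt_of_le_of_lt h1 hn
  have h3 : q * (1 / q) = 1 := by field_simp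
  nlinarith [mul_lt_mul_of_pos_left h2 hq0]
end

section
/- For k > 1 and q ∈ (0,1), one has φ_k(q) > 1/(1 + q^{k-1}), where φ_k(q) := Σ_{j=0}^∞ (-1)^j q^{kj + j(j-1)/2}. In particular φ_k(q) > 1/2. -/
lemma exp_mono {q k : ℝ} (hq0 : 0 < q) (hq1 : q < 1) (hk : 1 ≤ k) (j : ℕ) :
    (j : ℝ) ≤ k * j + j * (j - 1) / 2 := by
  have h1 : (0:ℝ) ≤ (j:ℝ) * ((j:ℝ) - 1) := by
    rcases Nat.eq_zero_or_pos j with h | h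
    · simp [h]
    · have : (1:ℝ) ≤ (j:ℝ) := by exact_mod_cast h
      nlinarith
  nlinarith [Nat.cast_nonneg (α := ℝ) j]

lemma summable_phi {q k : ℝ} (hq0 : 0 < q) (hq1 : q < 1) (hk : 1 ≤ k) :
    Summable (fun j : ℕ => (-1 : ℝ) ^ j * q ^ (k * j + j * (j - 1) / 2 : ℝ)) := by
  apply Summable.of_norm
  have hsum : Summable (fun j : ℕ => q ^ j) := summable_geometric_of_lt_one hq0.le hq1
  refine Summable.of_nonneg_of_le (fun j => norm_nonneg _) (fun j => ?_) hsum
  have : ‖(-1 : ℝ) ^ j * q ^ (k * j + j * (j - 1) / 2 : ℝ)‖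
      = q ^ (k * j + j * (j - 1) / 2 : ℝ) := by
    rw [norm_mul, norm_pow, norm_neg, norm_one, one_pow, one_mul,
      Real.norm_eq_abs, abs_of_pos (Real.rpow_pos_of_pos hq0 _)]
  rw [this]
  calc q ^ (k * j + j * (j - 1) / 2 : ℝ) ≤ q ^ (j : ℝ) :=
        Real.rpow_le_rpow_of_exponent_ge hq0 hq1.le (exp_mono hq0 hq1 hk j)
    _ = q ^ j := by rw [Real.rpow_natCast]

lemma phi_rec {q k : ℝ} (hq0 : 0 < q) (hq1 : q < 1) (hk : 1 ≤ k) :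
    phi k q = 1 - q ^ k * phi (k + 1) q := by
  unfold phi
  have hs := summable_phi hq0 hq1 hk
  rw [Summable.tsum_eq_zero_add hs]
  have h0 : (-1 : ℝ) ^ (0:ℕ) * q ^ (k * (0:ℕ) + (0:ℕ) * ((0:ℕ) - 1) / 2 : ℝ) = 1 := by
    norm_num
  have hshift : ∀ j : ℕ, (-1 : ℝ) ^ (j+1) * q ^ (k * (j+1:ℕ) + (j+1:ℕ) * ((j+1:ℕ) - 1) / 2 : ℝ)
      = (-(q ^ k)) * ((-1 : ℝ) ^ j * q ^ ((k+1) * j + j * (j - 1) / 2 : ℝ)) := by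
    intro j
    have hexp : (k * (j+1:ℕ) + (j+1:ℕ) * ((j+1:ℕ) - 1) / 2 : ℝ)
        = k + ((k+1) * j + j * (j - 1) / 2) := by
      push_cast
      ring
    rw [hexp, Real.rpow_add hq0]
    ring
  rw [tsum_congr hshift, tsum_mul_left, h0]
  ring

lemma phi_pos {q k : ℝ} (hq0 : 0 < q) (hq1 : q < 1) (hk : 1 ≤ k) : 0 < phi k q := by
  set f : ℕ → ℝ := fun j => (-1 : ℝ) ^ j * q ^ (k * j + j * (j - 1) / 2 : ℝ) with hf
  have hs : Summable f := summable_phi hq0 hq1 hk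
  have he : Summable (fun m : ℕ => f (2 * m)) :=
    hs.comp_injective (fun a b h => by omega)
  have ho : Summable (fun m : ℕ => f (2 * m + 1)) :=
    hs.comp_injective (fun a b h => by omega)
  have hsplit := tsum_even_add_odd he ho
  have hpos : ∀ m : ℕ, 0 < f (2 * m) + f (2 * m + 1) := by
    intro m
    have h1 : f (2 * m) = q ^ (k * (2*m:ℕ) + (2*m:ℕ) * ((2*m:ℕ) - 1) / 2 : ℝ) := by
      simp [hf, pow_mul]
    have h2 : f (2 * m + 1) = -q ^ (k * (2*m+1:ℕ) + (2*m+1:ℕ) * ((2*m+1:ℕ) - 1) / 2 : ℝ) := by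
      simp [hf, pow_succ, pow_mul]
    rw [h1, h2]
    have hlt : (k * (2*m:ℕ) + (2*m:ℕ) * ((2*m:ℕ) - 1) / 2 : ℝ)
        < (k * (2*m+1:ℕ) + (2*m+1:ℕ) * ((2*m+1:ℕ) - 1) / 2 : ℝ) := by
      push_cast
      nlinarith [Nat.cast_nonneg (α := ℝ) m]
    have := Real.rpow_lt_rpow_of_exponent_gt hq0 hq1 hlt
    linarith
  have hsum2 : Summable (fun m : ℕ => f (2 * m) + f (2 * m + 1)) := he.add ho
  have : 0 < ∑' m : ℕ, (f (2 * m) + f (2 * m + 1)) :=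
    Summable.tsum_pos hsum2 (fun m => (hpos m).le) 0 (hpos 0)
  rw [Summable.tsum_add he ho] at this
  unfold phi
  rw [← hsplit]
  exact this

lemma phi_lt_one {q k : ℝ} (hq0 : 0 < q) (hq1 : q < 1) (hk : 1 ≤ k) : phi k q < 1 := by
  rw [phi_rec hq0 hq1 hk]
  have h1 : 0 < phi (k + 1) q := phi_pos hq0 hq1 (by linarith)
  have h2 : 0 < q ^ k := Real.rpow_pos_of_pos hq0 k
  nlinarith

lemma key {q : ℝ} (hq0 : 0 < q) (hq1 : q < 1) :
    ∀ n : ℕ, ∀ k : ℝ, 1 < k → q ^ (k + 2 * n) ≤ 1 - q →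
      1 / (1 + q ^ (k - 1)) < phi k q := by
  intro n
  induction n with
  | zero =>
    intro k hk hsmall
    have hr0 : 0 < q ^ (k - 1) := Real.rpow_pos_of_pos hq0 _
    have hx : q ^ k = q ^ (k - 1) * q := by
      have := Real.rpow_add_one (ne_of_gt hq0) (k - 1)
      rwa [show k - 1 + 1 = k by ring] at this
    have hsmall' : q ^ k ≤ 1 - q := by
      have : (k + 2 * (0:ℕ) : ℝ) = k := by push_cast; ring
      rwa [this] at hsmall
    have hphi : 1 - q ^ k < phi k q := by
      rw [phi_rec hq0 hq1 hk.le]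
      have h1 : phi (k + 1) q < 1 := phi_lt_one hq0 hq1 (by linarith)
      have h2 : 0 < q ^ k := Real.rpow_pos_of_pos hq0 k
      nlinarith
    have : 1 / (1 + q ^ (k - 1)) ≤ 1 - q ^ k := by
      rw [div_le_iff₀ (by linarith)]
      nlinarith
    linarith
  | succ n ih =>
    intro k hk hsmall
    have hk2 : (1:ℝ) < k + 2 := by linarith
    have hsmall2 : q ^ ((k + 2) + 2 * n) ≤ 1 - q := by
      have : ((k + 2) + 2 * n : ℝ) = k + 2 * ((n:ℕ) + 1 : ℕ) := by push_cast; ring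
      rwa [this]
    have h2 := ih (k + 2) hk2 hsmall2
    -- phi k = 1 - q^k + q^k * q^(k+1) * phi (k+2)
    have hrec : phi k q = 1 - q ^ k + q ^ k * q ^ (k + 1) * phi (k + 2) q := by
      rw [phi_rec hq0 hq1 hk.le, phi_rec hq0 hq1 (by linarith : (1:ℝ) ≤ k + 1)]
      have : k + 1 + 1 = k + 2 := by ring
      rw [this]; ring
    set r := q ^ (k - 1) with hrdef
    have hr0 : 0 < r := Real.rpow_pos_of_pos hq0 _
    have hr1 : r < 1 := Real.rpow_lt_one hq0.le hq1 (by linarith)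
    have hxk : q ^ k = r * q := by
      have := Real.rpow_add_one (ne_of_gt hq0) (k - 1)
      rw [show k - 1 + 1 = k by ring] at this
      rw [this, hrdef]
    have hxkp1 : q ^ (k + 1) = r * q * q := by
      have h1 := Real.rpow_add_one (ne_of_gt hq0) k
      rw [h1, hxk]
    have hphi2pos : 0 < phi (k + 2) q := phi_pos hq0 hq1 (by linarith)
    have hbound : 1 - q ^ k + q ^ k * q ^ (k + 1) * (1 / (1 + q ^ (k + 1))) < phi k q := by
      rw [hrec]
      have hc : 0 < q ^ k * q ^ (k + 1) := by positivity
      have hd : 1 / (1 + q ^ (k + 1)) < phi (k + 2) q := by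
        have : (k + 2) - 1 = k + 1 := by ring
        rw [this] at h2; exact h2
      nlinarith
    have halg : 1 / (1 + r) ≤ 1 - q ^ k + q ^ k * q ^ (k + 1) * (1 / (1 + q ^ (k + 1))) := by
      rw [hxk, hxkp1]
      have hden : 0 < 1 + r * q * q := by positivity
      have hden2 : 0 < 1 + r := by linarith
      rw [div_le_iff₀ hden2]
      have hexp : (1 - r * q + r * q * (r * q * q) * (1 / (1 + r * q * q))) * (1 + r) - 1
          = (r * (1 - q) * (1 - r * q)) / (1 + r * q * q) := by
        field_simp
        ring
      have hrq : r * q < 1 := by nlinarith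
      have hnum : 0 ≤ r * (1 - q) * (1 - r * q) / (1 + r * q * q) :=
        div_nonneg (mul_nonneg (mul_nonneg hr0.le (by linarith)) (by linarith)) hden.le
      linarith [hexp, hnum]
    linarith

theorem phi_lower_bound (k : ℝ) (hk : 1 < k) (q : ℝ) (hq : q ∈ Set.Ioo (0 : ℝ) 1) :
    1 / (1 + q ^ (k - 1 : ℝ)) < phi k q ∧ 1 / 2 < phi k q := by
  obtain ⟨hq0, hq1⟩ := hq
  obtain ⟨n, hn⟩ := exists_pow_lt_of_lt_one (by linarith : (0:ℝ) < 1 - q) hq1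
  have hsmall : q ^ (k + 2 * n) ≤ 1 - q := by
    have h1 : q ^ (k + 2 * n) ≤ q ^ (n : ℝ) :=
      Real.rpow_le_rpow_of_exponent_ge hq0 hq1.le
        (by push_cast; linarith [Nat.cast_nonneg (α := ℝ) n])
    have h2 : q ^ (n : ℝ) = q ^ n := Real.rpow_natCast q n
    linarith [h1, h2 ▸ h1, hn.le]
  have hmain := key hq0 hq1 n k hk hsmall
  refine ⟨hmain, lt_trans ?_ hmain⟩
  have hr1 : q ^ (k - 1) < 1 := Real.rpow_lt_one hq0.le hq1 (by linarith)
  have hr0 : 0 < q ^ (k - 1) := Real.rpow_pos_of_pos hq0 _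
  rw [div_lt_div_iff₀ (by norm_num) (by linarith)]
  linarith
end

section
/- For k ≥ 1/2, the function φ_k(q) := Σ_{j=0}^∞ (-1)^j q^{kj + j(j-1)/2} is (weakly) decreasing on the interval [0, 1/2]. -/
/-! ### Auxiliary definitions -/

noncomputable def EE (k : ℝ) (j : ℕ) : ℝ := k * j + j * (j - 1) / 2

noncomputable def tt (k q : ℝ) (j : ℕ) : ℝ := (-1 : ℝ) ^ j * q ^ (EE k j)

noncomputable def Hfun (k q : ℝ) : ℝ :=
  1 - q ^ (k : ℝ) + q ^ (2*k+1) - q ^ (3*k+3) + q ^ (4*k+6)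

noncomputable def Pfun (k : ℝ) (m : ℕ) (q : ℝ) : ℝ :=
  q ^ (EE k (2*m+6)) - q ^ (EE k (2*m+5))

lemma phi_eq (k q : ℝ) : phi k q = ∑' j, tt k q j := rfl

lemma EE_half_le (k : ℝ) (hk : 1/2 ≤ k) (j : ℕ) : (j : ℝ)/2 ≤ EE k j := by
  have h0 : (0:ℝ) ≤ j := Nat.cast_nonneg j
  have h1 : (j:ℝ) * ((j:ℝ) - 1) ≥ 0 := by
    rcases Nat.eq_zero_or_pos j with h | h
    · simp [h]
    · have : (1:ℝ) ≤ j := by exact_mod_cast h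
      nlinarith
  unfold EE; nlinarith

lemma EE_nonneg (k : ℝ) (hk : 1/2 ≤ k) (j : ℕ) : 0 ≤ EE k j := by
  have := EE_half_le k hk j
  have h0 : (0:ℝ) ≤ j := Nat.cast_nonneg j
  linarith

/-! ### Summability -/

lemma summable_tt (k : ℝ) (hk : 1/2 ≤ k) {q : ℝ} (h0 : 0 ≤ q) (h2 : q ≤ 1/2) :
    Summable (tt k q) := by
  have hr0 : (0:ℝ) ≤ (1/2 : ℝ) ^ ((1:ℝ)/2) := Real.rpow_nonneg (by norm_num) _
  have hr1 : (1/2 : ℝ) ^ ((1:ℝ)/2) < 1 := Real.rpow_lt_one (by norm_num) (by norm_num) (by norm_num)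
  apply Summable.of_norm_bounded (summable_geometric_of_lt_one hr0 hr1)
  intro j
  have hq : q ^ (EE k j) ≤ (1/2 : ℝ) ^ (EE k j) :=
    Real.rpow_le_rpow h0 h2 (EE_nonneg k hk j)
  have h3 : (1/2 : ℝ) ^ (EE k j) ≤ (1/2 : ℝ) ^ ((j:ℝ)/2) :=
    Real.rpow_le_rpow_of_exponent_ge (by norm_num) (by norm_num) (EE_half_le k hk j)
  have h4 : (1/2 : ℝ) ^ ((j:ℝ)/2) = ((1/2 : ℝ) ^ ((1:ℝ)/2)) ^ j := by
    rw [← Real.rpow_natCast ((1/2 : ℝ) ^ ((1:ℝ)/2)) j, ← Real.rpow_mul (by norm_num)]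
    ring_nf
  have h5 : ‖tt k q j‖ = q ^ (EE k j) := by
    rw [tt, norm_mul, norm_pow, norm_neg, norm_one, one_pow, one_mul,
      Real.norm_eq_abs, abs_of_nonneg (Real.rpow_nonneg h0 _)]
  rw [h5, ← h4]; linarith

lemma summable_even (k : ℝ) (hk : 1/2 ≤ k) {q : ℝ} (h0 : 0 ≤ q) (h2 : q ≤ 1/2) :
    Summable (fun m => tt k q (2*m+5)) := by
  have hs5 : Summable (fun i => tt k q (i+5)) :=
    (summable_nat_add_iff 5).2 (summable_tt k hk h0 h2)
  have hinj : Function.Injective (fun m : ℕ => 2*m) := by intro a b h; dsimp at h; omega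
  have := hs5.comp_injective hinj
  simpa [Function.comp_def] using this

lemma summable_odd (k : ℝ) (hk : 1/2 ≤ k) {q : ℝ} (h0 : 0 ≤ q) (h2 : q ≤ 1/2) :
    Summable (fun m => tt k q (2*m+6)) := by
  have hs5 : Summable (fun i => tt k q (i+5)) :=
    (summable_nat_add_iff 5).2 (summable_tt k hk h0 h2)
  have hinj : Function.Injective (fun m : ℕ => 2*m+1) := by intro a b h; dsimp at h; omega
  have := hs5.comp_injective hinj
  have e : ∀ m : ℕ, 2*m+1+5 = 2*m+6 := fun m => by omega
  simpa [Function.comp_def, e] using this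

lemma summable_P (k : ℝ) (hk : 1/2 ≤ k) {q : ℝ} (h0 : 0 ≤ q) (h2 : q ≤ 1/2) :
    Summable (fun m => Pfun k m q) := by
  have h : ∀ m, Pfun k m q = tt k q (2*m+5) + tt k q (2*m+6) := by
    intro m
    have ho : ((-1:ℝ)) ^ (2*m+5) = -1 := Odd.neg_one_pow ⟨m+2, by ring⟩
    have he : ((-1:ℝ)) ^ (2*m+6) = 1 := Even.neg_one_pow ⟨m+3, by ring⟩
    simp [Pfun, tt, ho, he]; ring
  simp_rw [h]
  exact (summable_even k hk h0 h2).add (summable_odd k hk h0 h2)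

/-! ### Decomposition -/

lemma EE0 (k : ℝ) : EE k 0 = 0 := by unfold EE; push_cast; ring
lemma EE1 (k : ℝ) : EE k 1 = k := by unfold EE; push_cast; ring
lemma EE2 (k : ℝ) : EE k 2 = 2*k+1 := by unfold EE; push_cast; ring
lemma EE3 (k : ℝ) : EE k 3 = 3*k+3 := by unfold EE; push_cast; ring
lemma EE4 (k : ℝ) : EE k 4 = 4*k+6 := by unfold EE; push_cast; ring

lemma tt_head (k q : ℝ) : ∑ j ∈ Finset.range 5, tt k q j = Hfun k q := by
  rw [Finset.sum_range_succ, Finset.sum_range_succ, Finset.sum_range_succ,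
    Finset.sum_range_succ, Finset.sum_range_one]
  unfold tt Hfun
  rw [EE0, EE1, EE2, EE3, EE4, Real.rpow_zero]
  norm_num
  ring

lemma decomp (k : ℝ) (hk : 1/2 ≤ k) {q : ℝ} (h0 : 0 ≤ q) (h2 : q ≤ 1/2) :
    phi k q = Hfun k q + ∑' m, Pfun k m q := by
  have hs := summable_tt k hk h0 h2
  have hse := summable_even k hk h0 h2
  have hso := summable_odd k hk h0 h2
  have hso' : Summable (fun m => tt k q (2*m+1+5)) := by
    have e : ∀ m : ℕ, 2*m+1+5 = 2*m+6 := fun m => by omega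
    simpa [e] using hso
  have hP : ∀ m, Pfun k m q = tt k q (2*m+5) + tt k q (2*m+6) := by
    intro m
    have ho : ((-1:ℝ)) ^ (2*m+5) = -1 := Odd.neg_one_pow ⟨m+2, by ring⟩
    have he : ((-1:ℝ)) ^ (2*m+6) = 1 := Even.neg_one_pow ⟨m+3, by ring⟩
    simp [Pfun, tt, ho, he]; ring
  rw [phi_eq, ← Summable.sum_add_tsum_nat_add 5 hs, tt_head]
  congr 1
  have key := tsum_even_add_odd (f := fun i => tt k q (i+5)) hse hso'
  rw [← key]
  have e : ∀ m : ℕ, 2*m+1+5 = 2*m+6 := fun m => by omega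
  simp_rw [hP, e]
  exact (Summable.tsum_add hse hso).symm

/-! ### The analytic core -/

lemma poly83 (y : ℝ) (hy : 0 ≤ y) (h2 : y^2 ≤ 1/2) : 0 ≤ 83*y^8 - 44*y^3 + 11 := by
  nlinarith [sq_nonneg (y^4 - y), sq_nonneg (y^3 - 1/2), sq_nonneg (y^2 - y), sq_nonneg y,
    mul_nonneg hy (sq_nonneg (y^3-1/3)), sq_nonneg (y^4 - 1/4)]

lemma quad_core (k x y a b d : ℝ) (hk : 1/2 ≤ k) (hx0 : 0 < x) (hx : x ≤ 1/2)
    (hy0 : 0 ≤ y) (hyx : y*y = x) (ha0 : 0 ≤ a) (haley : a ≤ y^3)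
    (hb : b = x*(a*a)) (hd0 : 0 ≤ d) (hdle : d ≤ 1/11) :
    (2*k+1)*a + (4*k+6)*(b*d) ≤ k + (3*k+3)*b := by
  have hb0 : 0 ≤ b := by nlinarith [mul_self_nonneg a]
  have hy30 : 0 ≤ y^3 := pow_nonneg hy0 3
  have hy3 : y^3 ≤ 5/14 := by nlinarith [pow_nonneg hy0 3]
  have hC0 : (0:ℝ) ≤ (29*k+27)/11 := by linarith
  have hvert : (29*k+27)/11 * (x*(y^3 + a)) ≤ 2*k+1 := by
    have h1 : x*(y^3+a) ≤ 5/14 := by nlinarith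
    nlinarith [mul_le_mul_of_nonneg_left h1 hC0,
      mul_nonneg hx0.le (by linarith : (0:ℝ) ≤ y^3 + a)]
  have step1 : (2*k+1)*a - (29*k+27)/11 * x * a * a
      ≤ (2*k+1)*y^3 - (29*k+27)/11 * x * y^3 * y^3 := by
    nlinarith [mul_nonneg (sub_nonneg.2 haley) (sub_nonneg.2 hvert)]
  have step2 : (2*k+1)*y^3 - (29*k+27)/11 * x * y^3 * y^3 ≤ k := by
    have hcoef : 0 ≤ 11 + 29*y^8 - 22*y^3 := by nlinarith [pow_nonneg hy0 8]
    have hkk := mul_nonneg (by linarith : (0:ℝ) ≤ k - 1/2) hcoef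
    have hpoly : 0 ≤ 83*y^8 - 44*y^3 + 11 := poly83 y hy0 (by nlinarith)
    have h9 : (29*k+27)/11 * x * y^3 * y^3 = (29*k+27)/11 * y^8 := by
      rw [← hyx]; ring
    nlinarith [hkk, hpoly, h9]
  have h6 : (4*k+6) * (b*d) ≤ (4*k+6) * (b*(1/11)) :=
    mul_le_mul_of_nonneg_left (mul_le_mul_of_nonneg_left hdle hb0) (by linarith)
  nlinarith [step1, step2, h6]

lemma Gkey (k x : ℝ) (hk : 1/2 ≤ k) (hx0 : 0 < x) (hx : x ≤ 1/2) :
    (2*k+1) * x ^ (k+1) + (4*k+6) * x ^ (3*k+6) ≤ k + (3*k+3) * x ^ (2*k+3) := by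
  have hy0 : 0 ≤ Real.sqrt x := Real.sqrt_nonneg x
  have hyx : Real.sqrt x * Real.sqrt x = x := Real.mul_self_sqrt hx0.le
  have ha0 : 0 ≤ x ^ (k+1) := Real.rpow_nonneg hx0.le _
  have hd0 : 0 ≤ x ^ (k+3) := Real.rpow_nonneg hx0.le _
  have hc : x ^ (3*k+6) = x ^ (2*k+3) * x ^ (k+3) := by
    rw [← Real.rpow_add hx0]; ring_nf
  have hdle : x ^ (k+3) ≤ 1/11 := by
    have h1 : x ^ (k+3) * x ^ (k+3) = x ^ (2*k+6) := by rw [← Real.rpow_add hx0]; ring_nf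
    have h2 : x ^ (2*k+6) ≤ (1/2 : ℝ) ^ (2*k+6) :=
      Real.rpow_le_rpow hx0.le hx (by linarith)
    have h3 : (1/2 : ℝ) ^ (2*k+6) ≤ (1/2 : ℝ) ^ ((7:ℕ):ℝ) :=
      Real.rpow_le_rpow_of_exponent_ge (by norm_num) (by norm_num) (by push_cast; linarith)
    rw [Real.rpow_natCast] at h3
    norm_num at h3
    nlinarith
  have hb : x ^ (2*k+3) = x * (x ^ (k+1) * x ^ (k+1)) := by
    rw [← Real.rpow_add hx0]
    nth_rewrite 2 [← Real.rpow_one x]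
    rw [← Real.rpow_add hx0]; ring_nf
  have hs : x ^ ((3:ℝ)/2) = (Real.sqrt x)^3 := by
    rw [Real.sqrt_eq_rpow, ← Real.rpow_natCast (x ^ ((1:ℝ)/2)) 3, ← Real.rpow_mul hx0.le]
    norm_num
  have haley : x ^ (k+1) ≤ (Real.sqrt x)^3 := by
    rw [← hs]
    exact Real.rpow_le_rpow_of_exponent_ge hx0 (by linarith) (by linarith)
  rw [hc]
  exact quad_core k x (Real.sqrt x) _ _ _ hk hx0 hx hy0 hyx ha0 haley hb hd0 hdle

lemma key_deriv_le (k x : ℝ) (hk : 1/2 ≤ k) (hx0 : 0 < x) (hx : x ≤ 1/2) :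
    (2*k+1) * x ^ (2*k) + (4*k+6) * x ^ (4*k+5) ≤ k * x ^ (k-1) + (3*k+3) * x ^ (3*k+2) := by
  have h := mul_le_mul_of_nonneg_left (Gkey k x hk hx0 hx) (Real.rpow_nonneg hx0.le (k-1))
  have e1 : x ^ (k-1) * x ^ (k+1) = x ^ (2*k) := by rw [← Real.rpow_add hx0]; ring_nf
  have e2 : x ^ (k-1) * x ^ (3*k+6) = x ^ (4*k+5) := by rw [← Real.rpow_add hx0]; ring_nf
  have e3 : x ^ (k-1) * x ^ (2*k+3) = x ^ (3*k+2) := by rw [← Real.rpow_add hx0]; ring_nf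
  rw [← e1, ← e2, ← e3]
  nlinarith [h]

/-! ### Antitonicity of the head -/

lemma hasDerivAt_Hfun (k x : ℝ) (hx0 : 0 < x) :
    HasDerivAt (Hfun k)
      (-(k * x ^ (k-1)) + (2*k+1) * x ^ (2*k) - (3*k+3) * x ^ (3*k+2) + (4*k+6) * x ^ (4*k+5)) x := by
  have h1 := Real.hasDerivAt_rpow_const (x := x) (p := k) (Or.inl hx0.ne')
  have h2 := Real.hasDerivAt_rpow_const (x := x) (p := 2*k+1) (Or.inl hx0.ne')
  have h3 := Real.hasDerivAt_rpow_const (x := x) (p := 3*k+3) (Or.inl hx0.ne')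
  have h4 := Real.hasDerivAt_rpow_const (x := x) (p := 4*k+6) (Or.inl hx0.ne')
  have H := (((hasDerivAt_const x (1:ℝ)).sub h1).add h2).sub h3 |>.add h4
  convert H using 1
  · rfl
  · rfl
  · rfl
  rw [show (2*k+1-1 : ℝ) = 2*k by ring, show (3*k+3-1 : ℝ) = 3*k+2 by ring,
    show (4*k+6-1 : ℝ) = 4*k+5 by ring]
  ring

lemma Hfun_anti (k : ℝ) (hk : 1/2 ≤ k) : AntitoneOn (Hfun k) (Set.Icc 0 (1/2)) := by
  apply antitoneOn_of_deriv_nonpos (convex_Icc _ _)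
  · intro x hx
    have hk0 : (0:ℝ) ≤ k := by linarith
    have c1 : ContinuousAt (fun q : ℝ => q ^ (k:ℝ)) x :=
      Real.continuousAt_rpow_const x k (Or.inr hk0)
    have c2 : ContinuousAt (fun q : ℝ => q ^ (2*k+1)) x :=
      Real.continuousAt_rpow_const x _ (Or.inr (by linarith))
    have c3 : ContinuousAt (fun q : ℝ => q ^ (3*k+3)) x :=
      Real.continuousAt_rpow_const x _ (Or.inr (by linarith))
    have c4 : ContinuousAt (fun q : ℝ => q ^ (4*k+6)) x :=
      Real.continuousAt_rpow_const x _ (Or.inr (by linarith))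
    exact ((((continuousAt_const.sub c1).add c2).sub c3).add c4).continuousWithinAt
  · intro x hx
    rw [interior_Icc] at hx
    exact (hasDerivAt_Hfun k x hx.1).differentiableAt.differentiableWithinAt
  · intro x hx
    rw [interior_Icc] at hx
    rw [(hasDerivAt_Hfun k x hx.1).deriv]
    have := key_deriv_le k x hk hx.1 hx.2.le
    linarith

/-! ### Antitonicity of the pairs -/

lemma pair_core (A B u v : ℝ) (hA0 : 0 ≤ A) (hB : B ≤ 2*A) (hB0 : 0 ≤ B)
    (hu : 0 ≤ u) (hv0 : 0 ≤ v) (hv : v ≤ 1/32) : B * (u*v) ≤ A * u := by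
  nlinarith [mul_le_mul_of_nonneg_right (mul_le_mul hB hv hv0 (by linarith)) hu,
    mul_nonneg hA0 hu]

lemma EE_pair (k : ℝ) (hk : 1/2 ≤ k) (m : ℕ) :
    EE k (2*m+6) = EE k (2*m+5) + (k + (2*m+5)) ∧ k + (2*m+5) ≤ EE k (2*m+5) := by
  constructor
  · unfold EE; push_cast; ring
  · unfold EE
    have hm : (0:ℝ) ≤ (m:ℝ) := Nat.cast_nonneg m
    push_cast
    nlinarith

lemma hasDerivAt_Pfun (k : ℝ) (m : ℕ) (x : ℝ) (hx0 : 0 < x) :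
    HasDerivAt (Pfun k m)
      (EE k (2*m+6) * x ^ (EE k (2*m+6) - 1) - EE k (2*m+5) * x ^ (EE k (2*m+5) - 1)) x := by
  exact (Real.hasDerivAt_rpow_const (x := x) (p := EE k (2*m+6)) (Or.inl hx0.ne')).sub
    (Real.hasDerivAt_rpow_const (x := x) (p := EE k (2*m+5)) (Or.inl hx0.ne'))

lemma Pfun_anti (k : ℝ) (hk : 1/2 ≤ k) (m : ℕ) :
    AntitoneOn (Pfun k m) (Set.Icc 0 (1/2)) := by
  apply antitoneOn_of_deriv_nonpos (convex_Icc _ _)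
  · intro x hx
    have c1 : ContinuousAt (fun q : ℝ => q ^ (EE k (2*m+6))) x :=
      Real.continuousAt_rpow_const x _ (Or.inr (EE_nonneg k hk _))
    have c2 : ContinuousAt (fun q : ℝ => q ^ (EE k (2*m+5))) x :=
      Real.continuousAt_rpow_const x _ (Or.inr (EE_nonneg k hk _))
    exact (c1.sub c2).continuousWithinAt
  · intro x hx
    rw [interior_Icc] at hx
    exact (hasDerivAt_Pfun k m x hx.1).differentiableAt.differentiableWithinAt
  · intro x hx
    rw [interior_Icc] at hx
    obtain ⟨hx0, hx2⟩ := hx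
    rw [(hasDerivAt_Pfun k m x hx0).deriv]
    obtain ⟨hBA, hA⟩ := EE_pair k hk m
    set A := EE k (2*m+5)
    set B := EE k (2*m+6)
    have hA0 : 0 ≤ A := EE_nonneg k hk _
    have hB0 : 0 ≤ B := EE_nonneg k hk _
    have hm : (0:ℝ) ≤ (m:ℝ) := Nat.cast_nonneg m
    have hd5 : (5:ℝ) ≤ B - A := by rw [hBA]; push_cast; nlinarith
    have h1 : x ^ (B-1) = x ^ (A-1) * x ^ (B-A) := by
      rw [← Real.rpow_add hx0]; ring_nf
    have hu : 0 ≤ x ^ (A-1) := Real.rpow_nonneg hx0.le _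
    have hv0 : 0 ≤ x ^ (B-A) := Real.rpow_nonneg hx0.le _
    have hv : x ^ (B-A) ≤ 1/32 := by
      have h2 : x ^ (B-A) ≤ (1/2 : ℝ) ^ (B-A) :=
        Real.rpow_le_rpow hx0.le hx2.le (by linarith)
      have h3 : (1/2 : ℝ) ^ (B-A) ≤ (1/2 : ℝ) ^ ((5:ℕ):ℝ) :=
        Real.rpow_le_rpow_of_exponent_ge (by norm_num) (by norm_num) (by push_cast; linarith)
      rw [Real.rpow_natCast] at h3
      norm_num at h3
      linarith
    have hB2A : B ≤ 2*A := by rw [hBA]; linarith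
    have := pair_core A B (x ^ (A-1)) (x ^ (B-A)) hA0 hB2A hB0 hu hv0 hv
    rw [h1]
    nlinarith [this]

/-! ### Main theorem -/

theorem phi_antitone_on (k : ℝ) (hk : 1 / 2 ≤ k) :
    AntitoneOn (phi k) (Set.Icc (0 : ℝ) (1 / 2)) := by
  intro q1 h1 q2 h2 h12
  rw [decomp k hk h1.1 h1.2, decomp k hk h2.1 h2.2]
  have hH : Hfun k q2 ≤ Hfun k q1 := Hfun_anti k hk h1 h2 h12
  have hT : (∑' m, Pfun k m q2) ≤ ∑' m, Pfun k m q1 :=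
    Summable.tsum_le_tsum (fun m => Pfun_anti k hk m h1 h2 h12)
      (summable_P k hk h2.1 h2.2) (summable_P k hk h1.1 h1.2)
  linarith
end

section
/- For every k ≥ 1/2 and every q ∈ [0, 1/2], the quantity g₀(q) := -k + (2k+1)q^{k+1} - (3k+3)q^{2k+3} + (4k+6)q^{3k+6} is strictly negative. -/
lemma keyB (u : ℝ) (hu : 0 ≤ u) (hu2 : u^2 ≤ 1/2) : 7*u^8 - 4*u^3 + 1 > 0 := by
  nlinarith [mul_nonneg (sub_nonneg.2 hu2) (pow_nonneg hu 3), mul_nonneg (sub_nonneg.2 hu2) hu, mul_nonneg (sub_nonneg.2 hu2) (pow_nonneg hu 5), sq_nonneg (u^4 - 1/2*u), sq_nonneg (u^4-u), sq_nonneg (u^3-1/2), sq_nonneg (u^2-1/2), sq_nonneg (2*u^3-u), mul_nonneg (mul_nonneg hu hu) hu, sq_nonneg (u^4 - u^2), sq_nonneg (u^4 - u^3)]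

lemma keyA (u : ℝ) (hu : 0 ≤ u) (hu2 : u^2 ≤ 1/2) : 1 - 2*u^3 + (5/2)*u^8 ≥ 0 := by
  nlinarith [pow_nonneg hu 8, mul_nonneg (sub_nonneg.2 hu2) hu, sq_nonneg u, sq_nonneg (1-u)]

lemma key_s17 (k u : ℝ) (hk : 1/2 ≤ k) (hu : 0 ≤ u) (hu2 : u^2 ≤ 1/2) :
    -k + (2*k+1)*u^3 - (5*k/2+9/4)*u^8 < 0 := by
  have hA := keyA u hu hu2
  have hB := keyB u hu hu2
  nlinarith [mul_nonneg (sub_nonneg.2 hk) hA]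

theorem g0_neg (k : ℝ) (hk : 1 / 2 ≤ k) (q : ℝ) (hq : q ∈ Set.Icc (0 : ℝ) (1 / 2)) :
    -k + (2 * k + 1) * q ^ (k + 1 : ℝ) - (3 * k + 3) * q ^ (2 * k + 3 : ℝ) +
      (4 * k + 6) * q ^ (3 * k + 6 : ℝ) < 0 := by
  obtain ⟨hq0, hq2⟩ := hq
  rcases hq0.eq_or_lt with h | hqpos
  · rw [← h, Real.zero_rpow (by linarith), Real.zero_rpow (by linarith),
      Real.zero_rpow (by linarith)]
    linarith
  · have hq1 : q ≤ 1 := by linarith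
    set u : ℝ := q ^ ((k + 1) / 3 : ℝ) with hu_def
    have hu0 : 0 ≤ u := Real.rpow_nonneg hq0 _
    have h1 : q ^ (k + 1 : ℝ) = u ^ 3 := by
      rw [hu_def, ← Real.rpow_natCast (q ^ ((k + 1) / 3 : ℝ)) 3, ← Real.rpow_mul hq0]
      norm_num
    have h8 : u ^ 8 = q ^ (8 * (k + 1) / 3 : ℝ) := by
      rw [hu_def, ← Real.rpow_natCast (q ^ ((k + 1) / 3 : ℝ)) 8, ← Real.rpow_mul hq0]
      ring_nf
    have h2 : u ^ 8 ≤ q ^ (2 * k + 3 : ℝ) := by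
      rw [h8]
      exact Real.rpow_le_rpow_of_exponent_ge hqpos hq1 (by linarith)
    have hu2 : u ^ 2 ≤ 1 / 2 := by
      have hsq : u ^ 2 = q ^ (2 * (k + 1) / 3 : ℝ) := by
        rw [hu_def, ← Real.rpow_natCast (q ^ ((k + 1) / 3 : ℝ)) 2, ← Real.rpow_mul hq0]
        ring_nf
      rw [hsq]
      calc q ^ (2 * (k + 1) / 3 : ℝ) ≤ q ^ (1 : ℝ) :=
            Real.rpow_le_rpow_of_exponent_ge hqpos hq1 (by linarith)
        _ = q := Real.rpow_one q
        _ ≤ 1 / 2 := hq2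
    have hk3 : q ^ (k + 3 : ℝ) ≤ 1 / 8 := by
      calc q ^ (k + 3 : ℝ) ≤ q ^ (3 : ℝ) :=
            Real.rpow_le_rpow_of_exponent_ge hqpos hq1 (by linarith)
        _ ≤ (1 / 2 : ℝ) ^ (3 : ℝ) := Real.rpow_le_rpow hq0 hq2 (by norm_num)
        _ = 1 / 8 := by
            rw [show (3 : ℝ) = ((3 : ℕ) : ℝ) by norm_num, Real.rpow_natCast]
            norm_num
    have h3 : q ^ (3 * k + 6 : ℝ) ≤ q ^ (2 * k + 3 : ℝ) * (1 / 8) := by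
      have hsplit : q ^ (3 * k + 6 : ℝ) = q ^ (2 * k + 3 : ℝ) * q ^ (k + 3 : ℝ) := by
        rw [← Real.rpow_add hqpos]; ring_nf
      rw [hsplit]
      exact mul_le_mul_of_nonneg_left hk3 (Real.rpow_nonneg hq0 _)
    have hApos : 0 ≤ q ^ (2 * k + 3 : ℝ) := Real.rpow_nonneg hq0 _
    have hkey := key_s17 k u hk hu0 hu2
    rw [h1]
    nlinarith [mul_le_mul_of_nonneg_left h3 (show (0:ℝ) ≤ 4 * k + 6 by linarith),
      mul_le_mul_of_nonneg_left h2 (show (0:ℝ) ≤ 5 * k / 2 + 9 / 4 by linarith)]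
end

section
/- For q ∈ (0,1) and integer a ≥ 1, one has θ(q, -q^{-a}) = q^a · φ_{a+1}(q) > 0, where φ_{a+1}(q) = Σ_{j=0}^∞ (-1)^j q^{(a+1)j + j(j-1)/2}. In particular, for no q ∈ (0,1) is -q^{-a} (a a positive integer) a zero of θ(q,·). -/
/-- auxiliary term function: the terms of θ(q, -q^{-a}) written with real exponents -/
noncomputable def gAux (q : ℝ) (a : ℕ) (j : ℕ) : ℝ :=
  (-1 : ℝ) ^ j * q ^ ((j : ℝ) * ((j : ℝ) + 1) / 2 - (a : ℝ) * (j : ℝ))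

/-- auxiliary term function: the terms of φ_{a+1}(q) -/
noncomputable def hAux (q : ℝ) (a : ℕ) (m : ℕ) : ℝ :=
  (-1 : ℝ) ^ m * q ^ (((a : ℝ) + 1) * (m : ℝ) + (m : ℝ) * ((m : ℝ) - 1) / 2 : ℝ)

lemma hAux_summable (q : ℝ) (hq0 : 0 < q) (hq1 : q < 1) (a : ℕ) :
    Summable (hAux q a) := by
  apply Summable.of_norm
  apply Summable.of_nonneg_of_le (fun m => norm_nonneg _) _
    (summable_geometric_of_lt_one hq0.le hq1)
  intro m
  have hpos := Real.rpow_pos_of_pos hq0 (((a : ℝ) + 1) * (m : ℝ) + (m : ℝ) * ((m : ℝ) - 1) / 2)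
  have hnorm : ‖hAux q a m‖ = q ^ (((a : ℝ) + 1) * (m : ℝ) + (m : ℝ) * ((m : ℝ) - 1) / 2 : ℝ) := by
    unfold hAux
    rw [norm_mul, norm_pow, norm_neg, norm_one, one_pow, one_mul,
      Real.norm_of_nonneg hpos.le]
  rw [hnorm, ← Real.rpow_natCast q m]
  apply Real.rpow_le_rpow_of_exponent_ge hq0 hq1.le
  have hm0 : (0 : ℝ) ≤ (m : ℝ) := Nat.cast_nonneg m
  have hmm : (0 : ℝ) ≤ (m : ℝ) * ((m : ℝ) - 1) := by
    rcases Nat.eq_zero_or_pos m with h | h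
    · simp [h]
    · have : (1 : ℝ) ≤ (m : ℝ) := by exact_mod_cast h
      nlinarith
  have ha0 : (0 : ℝ) ≤ (a : ℝ) := Nat.cast_nonneg a
  nlinarith

lemma gAux_shift (q : ℝ) (hq0 : 0 < q) (a : ℕ) (m : ℕ) :
    gAux q a (m + 2 * a) = q ^ (a : ℝ) * hAux q a m := by
  unfold gAux hAux
  have hsign : ((-1 : ℝ)) ^ (m + 2 * a) = (-1 : ℝ) ^ m := by
    rw [pow_add, pow_mul, neg_one_sq, one_pow, mul_one]
  have hexp : ((m + 2 * a : ℕ) : ℝ) * (((m + 2 * a : ℕ) : ℝ) + 1) / 2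
      - (a : ℝ) * ((m + 2 * a : ℕ) : ℝ)
      = (a : ℝ) + ((((a : ℝ) + 1) * (m : ℝ) + (m : ℝ) * ((m : ℝ) - 1) / 2)) := by
    push_cast; ring
  rw [hsign, hexp, Real.rpow_add hq0]; ring

theorem theta_at_neg_int_power (q : ℝ) (hq : q ∈ Set.Ioo (0 : ℝ) 1) (a : ℕ) (ha : 1 ≤ a) :
    thetaR q (-q ^ (-(a : ℝ))) = q ^ (a : ℝ) * phi ((a : ℝ) + 1) q ∧
      0 < thetaR q (-q ^ (-(a : ℝ))) := by
  obtain ⟨hq0, hq1⟩ := hq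
  -- Step 1: thetaR = ∑' gAux
  have hterm : ∀ j : ℕ, q ^ (j * (j + 1) / 2) * (-q ^ (-(a : ℝ))) ^ j = gAux q a j := by
    intro j
    obtain ⟨k, hk⟩ := Nat.even_mul_succ_self j
    have hn : j * (j + 1) / 2 = k := by omega
    have hkr : (j : ℝ) * ((j : ℝ) + 1) / 2 = (k : ℝ) := by
      have : ((j * (j + 1) : ℕ) : ℝ) = ((k + k : ℕ) : ℝ) := by rw [hk]
      push_cast at this; linarith
    have he : (j : ℝ) * ((j : ℝ) + 1) / 2 - (a : ℝ) * (j : ℝ)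
        = (k : ℝ) + (-(a : ℝ)) * (j : ℝ) := by rw [hkr]; ring
    unfold gAux
    rw [hn, he, neg_pow, ← Real.rpow_natCast q k,
      ← Real.rpow_natCast (q ^ (-(a : ℝ))) j, ← Real.rpow_mul hq0.le,
      Real.rpow_add hq0]
    ring
  have htheta : thetaR q (-q ^ (-(a : ℝ))) = ∑' j : ℕ, gAux q a j := by
    unfold thetaR
    exact tsum_congr hterm
  -- summability
  have hh : Summable (hAux q a) := hAux_summable q hq0 hq1 a
  have hshift : (fun m => gAux q a (m + 2 * a)) = fun m => q ^ (a : ℝ) * hAux q a m := by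
    funext m; exact gAux_shift q hq0 a m
  have hgsh : Summable (fun m => gAux q a (m + 2 * a)) := by
    rw [hshift]; exact hh.mul_left _
  have hg : Summable (gAux q a) := (summable_nat_add_iff (2 * a)).mp hgsh
  -- Step 2: finite sum over range (2a) vanishes
  have hpair : ∀ j ∈ Finset.range (2 * a), gAux q a (2 * a - 1 - j) = -gAux q a j := by
    intro j hj
    rw [Finset.mem_range] at hj
    set j' := 2 * a - 1 - j with hj'
    have hjj : j' + (j + 1) = 2 * a := by omega
    have hcast : (j' : ℝ) = 2 * (a : ℝ) - ((j : ℝ) + 1) := by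
      have : ((j' + (j + 1) : ℕ) : ℝ) = ((2 * a : ℕ) : ℝ) := by rw [hjj]
      push_cast at this; linarith
    have hpar : ((-1 : ℝ)) ^ j' = -(-1 : ℝ) ^ j := by
      rcases Nat.even_or_odd j with h | h
      · have h' : Odd j' := by
          rw [Nat.odd_iff]; rw [Nat.even_iff] at h; omega
        rw [h.neg_one_pow, h'.neg_one_pow]
      · have h' : Even j' := by
          rw [Nat.even_iff]; rw [Nat.odd_iff] at h; omega
        rw [h.neg_one_pow, h'.neg_one_pow]; norm_num
    have hexp : (j' : ℝ) * ((j' : ℝ) + 1) / 2 - (a : ℝ) * (j' : ℝ)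
        = (j : ℝ) * ((j : ℝ) + 1) / 2 - (a : ℝ) * (j : ℝ) := by
      rw [hcast]; ring
    unfold gAux
    rw [hpar, hexp]; ring
  have hsum0 : ∑ j ∈ Finset.range (2 * a), gAux q a j = 0 := by
    have hrefl := Finset.sum_range_reflect (gAux q a) (2 * a)
    have : ∑ j ∈ Finset.range (2 * a), gAux q a (2 * a - 1 - j)
        = ∑ j ∈ Finset.range (2 * a), (-gAux q a j) := Finset.sum_congr rfl hpair
    rw [this, Finset.sum_neg_distrib] at hrefl
    linarith
  -- Step 3: equality
  have hphi : phi ((a : ℝ) + 1) q = ∑' m : ℕ, hAux q a m := by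
    unfold phi hAux; rfl
  have heq : thetaR q (-q ^ (-(a : ℝ))) = q ^ (a : ℝ) * phi ((a : ℝ) + 1) q := by
    rw [htheta, ← Summable.sum_add_tsum_nat_add (2 * a) hg, hsum0, zero_add, hshift, hphi,
      tsum_mul_left]
  refine ⟨heq, ?_⟩
  -- Step 4: positivity of phi
  have hA : Summable (fun k => hAux q a (2 * k)) :=
    hh.comp_injective (fun x y hxy => by omega)
  have hB : Summable (fun k => hAux q a (2 * k + 1)) :=
    hh.comp_injective (fun x y hxy => by omega)
  have hsplit := tsum_even_add_odd hA hB
  set E : ℕ → ℝ := fun m => ((a : ℝ) + 1) * (m : ℝ) + (m : ℝ) * ((m : ℝ) - 1) / 2 with hE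
  have hAe : ∀ k : ℕ, hAux q a (2 * k) = q ^ E (2 * k) := by
    intro k; unfold hAux; rw [hE]; simp [pow_mul]
  have hBe : ∀ k : ℕ, hAux q a (2 * k + 1) = -q ^ E (2 * k + 1) := by
    intro k; unfold hAux; rw [hE]
    rw [pow_add, pow_mul, neg_one_sq, one_pow, pow_one]; ring
  have hAs : Summable (fun k : ℕ => q ^ E (2 * k)) := by
    have : (fun k : ℕ => q ^ E (2 * k)) = fun k => hAux q a (2 * k) := by
      funext k; rw [hAe]
    rw [this]; exact hA
  have hBs : Summable (fun k : ℕ => q ^ E (2 * k + 1)) := by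
    have : (fun k : ℕ => q ^ E (2 * k + 1)) = fun k => -hAux q a (2 * k + 1) := by
      funext k; rw [hBe]; ring
    rw [this]; exact hB.neg
  have hlt : ∑' k : ℕ, q ^ E (2 * k + 1) < ∑' k : ℕ, q ^ E (2 * k) := by
    refine Summable.tsum_lt_tsum (i := 0) (fun k => ?_) ?_ hBs hAs
    · apply le_of_lt
      apply Real.rpow_lt_rpow_of_exponent_gt hq0 hq1
      rw [hE]
      have ha0 : (0 : ℝ) ≤ (a : ℝ) := Nat.cast_nonneg a
      have hk0 : (0 : ℝ) ≤ (k : ℝ) := Nat.cast_nonneg k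
      push_cast
      nlinarith
    · apply Real.rpow_lt_rpow_of_exponent_gt hq0 hq1
      rw [hE]
      have ha0 : (0 : ℝ) ≤ (a : ℝ) := Nat.cast_nonneg a
      push_cast
      nlinarith
  have hphi_pos : 0 < phi ((a : ℝ) + 1) q := by
    rw [hphi, ← hsplit]
    have h1 : ∑' k : ℕ, hAux q a (2 * k) = ∑' k : ℕ, q ^ E (2 * k) := tsum_congr hAe
    have h2 : ∑' k : ℕ, hAux q a (2 * k + 1) = -∑' k : ℕ, q ^ E (2 * k + 1) := by
      rw [← tsum_neg]; exact tsum_congr hBe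
    rw [h1, h2]
    linarith
  rw [heq]
  exact mul_pos (Real.rpow_pos_of_pos hq0 _) hphi_pos
end
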